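/- arXiv:2110.00129 — 8 statements merged into one kernel-verified Lean document; each statement's English description precedes it below -/
import Mathlib

section
/- Let p be a prime and α ∈ ℤ_(p) (a rational p-adic integer) with e a positive integer such that (p^e - 1)·α ∈ ℤ. Then for all sufficiently large a, the unique integer n with 0 ≤ n < p^{ea} and α ≡ n (mod p^{ea}) equals (1 - p^{ae})(α - ⌈α⌉) + ⌈α⌉ if α is not a negative integer, and equals p^{ae} + α if α is a negative integer. -/
/-- `TruncAt p E α m` : `m` is the `E`-th p-adic truncation of the rational
p-adic integer `α`, i.e. the unique integer with `0 ≤ m < p^E` and `α ≡ m mod p^E`. -/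
def TruncAt (p : ℕ) [Fact p.Prime] (E : ℕ) (α : ℚ) (m : ℤ) : Prop :=
  0 ≤ m ∧ m < (p : ℤ) ^ E ∧ ‖((α : ℚ_[p]) - (m : ℚ_[p]))‖ ≤ (p : ℝ) ^ (-(E : ℤ))

lemma trunc_norm_aux (p : ℕ) [Fact p.Prime] (E : ℕ) (α t : ℚ) (m : ℤ)
    (heq : α - (m : ℚ) = (p : ℚ) ^ E * t) (ht : ‖(t : ℚ_[p])‖ ≤ 1) :
    ‖((α : ℚ_[p]) - (m : ℚ_[p]))‖ ≤ (p : ℝ) ^ (-(E : ℤ)) := by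
  have hp0 : (0:ℝ) < (p:ℝ) := by
    exact_mod_cast (Fact.out : p.Prime).pos
  have h2 : (α : ℚ_[p]) - (m : ℚ_[p]) = (p : ℚ_[p]) ^ E * (t : ℚ_[p]) := by
    have := congrArg (fun x : ℚ => (x : ℚ_[p])) heq
    push_cast at this
    exact_mod_cast this
  rw [h2, norm_mul, norm_pow, Padic.norm_p]
  have hkey : ((p:ℝ)⁻¹) ^ E = (p : ℝ) ^ (-(E : ℤ)) := by
    rw [inv_pow, ← zpow_natCast, ← zpow_neg]
  calc ((p:ℝ)⁻¹) ^ E * ‖(t : ℚ_[p])‖ ≤ ((p:ℝ)⁻¹) ^ E * 1 := by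
        apply mul_le_mul_of_nonneg_left ht (by positivity)
    _ = (p : ℝ) ^ (-(E : ℤ)) := by rw [mul_one, hkey]

theorem stmt0 (p : ℕ) [Fact p.Prime] (e : ℕ) (he : 1 ≤ e) (α : ℚ)
    (hz : ∃ z : ℤ, ((p : ℚ) ^ e - 1) * α = (z : ℚ)) :
    ∃ N : ℕ, ∀ a : ℕ, N ≤ a →
      (((∃ k : ℤ, k < 0 ∧ α = (k : ℚ)) →
        ∃ m : ℤ, ((p : ℚ) ^ (a * e) + α = (m : ℚ)) ∧ TruncAt p (e * a) α m) ∧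
      ((¬ ∃ k : ℤ, k < 0 ∧ α = (k : ℚ)) →
        ∃ m : ℤ, ((1 - (p : ℚ) ^ (a * e)) * (α - (⌈α⌉ : ℚ)) + (⌈α⌉ : ℚ) = (m : ℚ)) ∧
          TruncAt p (e * a) α m)) := by
  obtain ⟨z, hzq⟩ := hz
  have hp2 : (2:ℤ) ≤ (p:ℤ) := by exact_mod_cast (Fact.out : p.Prime).two_le
  set c : ℤ := ⌈α⌉ with hc
  set q : ℤ := (p:ℤ) ^ e - 1 with hqdef
  have hpe2 : (2:ℤ) ≤ (p:ℤ) ^ e := le_trans hp2 (le_self_pow₀ (by omega) (by omega))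
  have hq1 : 1 ≤ q := by omega
  set w : ℤ := z - q * c with hwdef
  have hβ : (q : ℚ) * (α - (c : ℚ)) = (w : ℚ) := by
    push_cast [hwdef, hqdef]
    linear_combination hzq
  have hq0 : (q : ℚ) ≠ 0 := by exact_mod_cast (by omega : q ≠ 0)
  -- bounds on w
  have hβle : α - (c : ℚ) ≤ 0 := by
    have := Int.le_ceil α; rw [← hc] at this; linarith
  have hβgt : (-1 : ℚ) < α - (c : ℚ) := by
    have := Int.ceil_lt_add_one α; rw [← hc] at this; linarith
  have hqQ : (0:ℚ) < (q:ℚ) := by exact_mod_cast (by omega : (0:ℤ) < q)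
  have hw0 : w ≤ 0 := by
    have : (w:ℚ) ≤ 0 := by
      rw [← hβ]; exact mul_nonpos_of_nonneg_of_nonpos (le_of_lt hqQ) hβle
    exact_mod_cast this
  have hwq : -q < w := by
    have : (-(q:ℚ)) < (w:ℚ) := by
      rw [← hβ]
      nlinarith
    exact_mod_cast this
  -- norm of the fractional part
  have hqnorm : ‖((q:ℤ) : ℚ_[p])‖ = 1 := by
    refine le_antisymm (Padic.norm_int_le_one q) ?_
    by_contra h
    push_neg at h
    rw [Padic.norm_intCast_lt_one_iff] at h
    have h1 : (p:ℤ) ∣ (p:ℤ) ^ e := dvd_pow_self _ (by omega)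
    have h2 : (p:ℤ) ∣ 1 := by
      have h3 := Int.dvd_sub h1 h
      rw [hqdef] at h3
      simpa using h3
    have := Int.le_of_dvd one_pos h2
    omega
  have hβnorm : ‖(((α - (c : ℚ)) : ℚ) : ℚ_[p])‖ ≤ 1 := by
    have hEq : ((q:ℤ) : ℚ_[p]) * (((α - (c : ℚ)) : ℚ) : ℚ_[p]) = ((w:ℤ) : ℚ_[p]) := by
      have := congrArg (fun x : ℚ => (x : ℚ_[p])) hβ
      push_cast at this ⊢
      exact this
    have h1 := Padic.norm_int_le_one (p := p) w
    rw [← hEq, norm_mul, hqnorm, one_mul] at h1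
    exact h1
  refine ⟨(q * (|c| + 1) + 1).toNat, fun a ha => ?_⟩
  have hT : q * (|c| + 1) + 1 ≤ (a : ℤ) := by
    have h1 : (0:ℤ) ≤ q * (|c| + 1) + 1 := by positivity
    have := Int.toNat_of_nonneg h1
    omega
  have hpowa : (a : ℤ) + 1 ≤ (p:ℤ) ^ (e * a) := by
    have h1 : a < 2 ^ a := Nat.lt_two_pow_self
    have h2 : (2:ℕ) ^ a ≤ 2 ^ (e * a) := Nat.pow_le_pow_right (by omega) (Nat.le_mul_of_pos_left a (by omega))
    have h3 : (2:ℕ) ^ (e * a) ≤ p ^ (e * a) := Nat.pow_le_pow_left (by exact_mod_cast hp2) _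
    have : a + 1 ≤ p ^ (e * a) := by omega
    exact_mod_cast this
  have hbig : q * (|c| + 1) + 2 ≤ (p:ℤ) ^ (e * a) := by omega
  -- divisibility and D
  have hdvd : q ∣ (p:ℤ) ^ (e * a) - 1 := by
    have h1 : (p:ℤ) ^ (e * a) = ((p:ℤ) ^ e) ^ a := by rw [← pow_mul]
    rw [h1, hqdef]
    simpa using sub_dvd_pow_sub_pow ((p:ℤ) ^ e) 1 a
  set D : ℤ := ((p:ℤ) ^ (e * a) - 1) / q with hDdef
  have hqD : q * D = (p:ℤ) ^ (e * a) - 1 := Int.mul_ediv_cancel' hdvd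
  have hDge : |c| + 1 ≤ D := by
    have h1 : q * (|c| + 1) < q * D := by omega
    have := lt_of_mul_lt_mul_left h1 (by omega : (0:ℤ) ≤ q)
    omega
  have habs := abs_nonneg c
  have hle_abs := le_abs_self c
  have hneg_abs := neg_abs_le c
  have hqDQ : (q : ℚ) * (D : ℚ) = (p:ℚ) ^ (e * a) - 1 := by exact_mod_cast hqD
  have hpowcomm : (p:ℚ) ^ (a * e) = (p:ℚ) ^ (e * a) := by rw [mul_comm]
  constructor
  · -- negative integer case
    rintro ⟨k, hk, hαk⟩
    have hck : c = k := by rw [hc, hαk, Int.ceil_intCast]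
    refine ⟨(p:ℤ) ^ (e * a) + k, ?_, ?_, ?_, ?_⟩
    · rw [hαk]; push_cast [hpowcomm]; ring
    · have : |c| = -k := by rw [hck]; exact abs_of_neg hk
      nlinarith
    · omega
    · apply trunc_norm_aux p (e * a) α (-1) ((p:ℤ) ^ (e * a) + k)
      · rw [hαk]; push_cast; ring
      · push_cast
        simp
  · -- not a negative integer
    intro hneg
    refine ⟨c - w * D, ?_, ?_, ?_, ?_⟩
    · -- the formula equation
      have key : (q:ℚ) * ((1 - (p:ℚ) ^ (a * e)) * (α - (c:ℚ)) + (c:ℚ)) =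
          (q:ℚ) * ((c - w * D : ℤ) : ℚ) := by
        push_cast
        rw [hpowcomm]
        linear_combination (1 - (p:ℚ) ^ (e * a)) * hβ + (w:ℚ) * hqDQ
      exact mul_left_cancel₀ hq0 key
    · -- 0 ≤ m
      rcases eq_or_lt_of_le hw0 with hw | hw
      · -- w = 0 : α = c, c ≥ 0
        have hα : α = (c:ℚ) := by
          have : (q:ℚ) * (α - (c:ℚ)) = 0 := by rw [hβ]; exact_mod_cast hw
          have := mul_eq_zero.mp this
          rcases this with h | h
          · exact absurd h hq0
          · linarith
        have hc0 : 0 ≤ c := by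
          by_contra hc'
          exact hneg ⟨c, by omega, hα⟩
        rw [hw]
        simpa using hc0
      · -- w < 0
        have h1 : D ≤ (-w) * D := le_mul_of_one_le_left (by omega) (by omega)
        nlinarith
    · -- m < p^(ea)
      have h1 : (-w) * D ≤ (q - 1) * D := mul_le_mul_of_nonneg_right (by omega) (by omega)
      nlinarith
    · -- norm
      apply trunc_norm_aux p (e * a) α (α - (c:ℚ)) (c - w * D)
      · have key : (q:ℚ) * (α - ((c - w * D : ℤ) : ℚ)) =
            (q:ℚ) * ((p:ℚ) ^ (e * a) * (α - (c:ℚ))) := by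
          push_cast
          linear_combination (1 - (p:ℚ) ^ (e * a)) * hβ + (w:ℚ) * hqDQ
        exact mul_left_cancel₀ hq0 key
      · exact hβnorm
end

section
/- Let R be a commutative ring of prime characteristic p, 𝔞 ⊆ R an ideal generated by r elements, and e, m ≥ 0 integers. If n ≥ m·p^e + (r-1)·(p^e - 1), then 𝔞^n = 𝔞^{n - m p^e} · (𝔞^{[p^e]})^m, where 𝔞^{[p^e]} denotes the ideal generated by the p^e-th powers of elements of 𝔞. -/
/-- The Frobenius power `I^{[p^e]}`: the ideal generated by the `p^e`-th powers
of the elements of `I`. -/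
def FrobPow {R : Type*} [CommRing R] (p e : ℕ) (I : Ideal R) : Ideal R :=
  Ideal.span ((fun x : R => x ^ p ^ e) '' (I : Set R))

section Aux

variable {R : Type*} [CommRing R] {r : ℕ}

lemma prod_pow_add (f : Fin r → R) (k l : Fin r → ℕ) :
    ∏ i, f i ^ (k i + l i) = (∏ i, f i ^ k i) * ∏ i, f i ^ l i := by
  simp [pow_add, Finset.prod_mul_distrib]

lemma prod_pow_single (f : Fin r → R) (j : Fin r) (c : ℕ) :
    ∏ i, f i ^ ((Pi.single j c : Fin r → ℕ) i) = f j ^ c := by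
  refine (Finset.prod_eq_single j ?_ ?_).trans ?_
  · intro b _ hbj; simp [Pi.single_eq_of_ne hbj]
  · intro h; exact absurd (Finset.mem_univ j) h
  · simp

/-- Monomial description of powers of a finitely generated ideal. -/
lemma span_pow_monomials (f : Fin r → R) (n : ℕ) :
    Ideal.span (Set.range f) ^ n =
      Ideal.span {x : R | ∃ k : Fin r → ℕ, ∑ i, k i = n ∧ x = ∏ i, f i ^ k i} := by
  induction n with
  | zero =>
    rw [pow_zero, Ideal.one_eq_top]
    symm
    rw [Ideal.eq_top_iff_one]
    exact Ideal.subset_span ⟨0, by simp, by simp⟩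
  | succ n ih =>
    rw [pow_succ, ih, Ideal.span_mul_span']
    congr 1
    ext x
    constructor
    · rintro ⟨y, ⟨k, hk, rfl⟩, z, ⟨j, rfl⟩, rfl⟩
      refine ⟨fun i => k i + (Pi.single j 1 : Fin r → ℕ) i, ?_, ?_⟩
      · simp [Finset.sum_add_distrib, hk, Finset.sum_pi_single']
      · rw [prod_pow_add, prod_pow_single, pow_one]
    · rintro ⟨k, hk, rfl⟩
      have hne : ∑ i, k i ≠ 0 := by omega
      obtain ⟨j, -, hj⟩ := Finset.exists_ne_zero_of_sum_ne_zero hne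
      set k' : Fin r → ℕ := fun i => k i - (Pi.single j 1 : Fin r → ℕ) i with hk'
      have hdec : ∀ i, k i = k' i + (Pi.single j 1 : Fin r → ℕ) i := by
        intro i
        rcases eq_or_ne i j with rfl | h
        · simp [hk']; omega
        · simp [hk', Pi.single_eq_of_ne h]
      have hsum : ∑ i, k' i = n := by
        have : ∑ i, k i = (∑ i, k' i) + ∑ i, (Pi.single j 1 : Fin r → ℕ) i := by
          rw [← Finset.sum_add_distrib]
          exact Finset.sum_congr rfl fun i _ => hdec i
        rw [Finset.sum_pi_single'] at this
        simp at this
        omega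
      refine ⟨∏ i, f i ^ k' i, ⟨k', hsum, rfl⟩, f j, ⟨j, rfl⟩, ?_⟩
      calc (∏ i, f i ^ k' i) * f j
          = (∏ i, f i ^ k' i) * ∏ i, f i ^ ((Pi.single j 1 : Fin r → ℕ) i) := by
            rw [prod_pow_single, pow_one]
        _ = ∏ i, f i ^ (k' i + (Pi.single j 1 : Fin r → ℕ) i) := (prod_pow_add f k' _).symm
        _ = ∏ i, f i ^ k i := by
            exact Finset.prod_congr rfl fun i _ => by rw [← hdec i]

lemma pigeonhole {q : ℕ} (hq : 1 ≤ q) (k : Fin r → ℕ)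
    (h : q + (r - 1) * (q - 1) ≤ ∑ i, k i) : ∃ j, q ≤ k j := by
  by_contra h'
  push_neg at h'
  have hs : ∑ i, k i ≤ ∑ _i : Fin r, (q - 1) :=
    Finset.sum_le_sum fun i _ => by have := h' i; omega
  simp only [Finset.sum_const, Finset.card_fin, smul_eq_mul] at hs
  have h2 : q + (r - 1) * (q - 1) ≤ r * (q - 1) := le_trans h hs
  cases r with
  | zero => simp at h2; omega
  | succ s =>
    have h3 : (s + 1) * (q - 1) = s * (q - 1) + (q - 1) := by ring
    simp only [Nat.succ_sub_one] at h2
    rw [h3] at h2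
    omega

end Aux

theorem stmt6 {R : Type*} [CommRing R] (p : ℕ) (hp : p.Prime) [CharP R p]
    (r : ℕ) (f : Fin r → R) (𝔞 : Ideal R) (h𝔞 : 𝔞 = Ideal.span (Set.range f))
    (e m n : ℕ) (hn : m * p ^ e + (r - 1) * (p ^ e - 1) ≤ n) :
    𝔞 ^ n = 𝔞 ^ (n - m * p ^ e) * (FrobPow p e 𝔞) ^ m := by
  set q := p ^ e with hqdef
  have hq : 1 ≤ q := Nat.one_le_pow _ _ hp.pos
  have hF : FrobPow p e 𝔞 ≤ 𝔞 ^ q := by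
    rw [FrobPow]
    refine Ideal.span_le.2 ?_
    rintro x ⟨y, hy, rfl⟩
    exact Ideal.pow_mem_pow hy q
  -- the key one-step equality
  have key : ∀ N, q + (r - 1) * (q - 1) ≤ N →
      𝔞 ^ N = 𝔞 ^ (N - q) * FrobPow p e 𝔞 := by
    intro N hN
    apply le_antisymm
    · rw [h𝔞, span_pow_monomials, span_pow_monomials]
      refine Ideal.span_le.2 ?_
      rintro x ⟨k, hk, rfl⟩
      obtain ⟨j, hj⟩ := pigeonhole hq k (hk ▸ hN)
      set k' : Fin r → ℕ := fun i => k i - (Pi.single j q : Fin r → ℕ) i with hk'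
      have hdec : ∀ i, k i = k' i + (Pi.single j q : Fin r → ℕ) i := by
        intro i
        rcases eq_or_ne i j with rfl | h
        · simp [hk']; omega
        · simp [hk', Pi.single_eq_of_ne h]
      have hsum : ∑ i, k' i = N - q := by
        have : ∑ i, k i = (∑ i, k' i) + ∑ i, (Pi.single j q : Fin r → ℕ) i := by
          rw [← Finset.sum_add_distrib]
          exact Finset.sum_congr rfl fun i _ => hdec i
        rw [Finset.sum_pi_single'] at this
        simp only [Finset.mem_univ, if_true] at this
        omega
      have heq : ∏ i, f i ^ k i = (∏ i, f i ^ k' i) * f j ^ q := by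
        calc ∏ i, f i ^ k i = ∏ i, f i ^ (k' i + (Pi.single j q : Fin r → ℕ) i) :=
              Finset.prod_congr rfl fun i _ => by rw [← hdec i]
          _ = (∏ i, f i ^ k' i) * ∏ i, f i ^ ((Pi.single j q : Fin r → ℕ) i) := prod_pow_add f k' _
          _ = (∏ i, f i ^ k' i) * f j ^ q := by rw [prod_pow_single]
      rw [heq]
      have h1 : (∏ i, f i ^ k' i) ∈
          Ideal.span {x : R | ∃ k : Fin r → ℕ, ∑ i, k i = N - q ∧ x = ∏ i, f i ^ k i} :=
        Ideal.subset_span ⟨k', hsum, rfl⟩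
      have hfj : f j ∈ Ideal.span (Set.range f) := Ideal.subset_span ⟨j, rfl⟩
      have h2 : f j ^ q ∈ FrobPow p e (Ideal.span (Set.range f)) :=
        Ideal.subset_span ⟨f j, hfj, rfl⟩
      exact Ideal.mul_mem_mul h1 h2
    · calc 𝔞 ^ (N - q) * FrobPow p e 𝔞 ≤ 𝔞 ^ (N - q) * 𝔞 ^ q :=
            Ideal.mul_mono_right hF
        _ = 𝔞 ^ N := by rw [← pow_add]; congr 1; omega
  clear hF
  induction m generalizing n with
  | zero => simp
  | succ m ih =>
    have hq1 : q + (r - 1) * (q - 1) ≤ n := by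
      have : (m + 1) * q = m * q + q := by ring
      omega
    have step := key n hq1
    have hn' : m * q + (r - 1) * (q - 1) ≤ n - q := by
      have : (m + 1) * q = m * q + q := by ring
      omega
    have hnm : n - q - m * q = n - (m + 1) * q := by
      have h : (m + 1) * q = m * q + q := by ring
      omega
    rw [step, ih (n - q) hn', hnm, pow_succ, mul_assoc, mul_comm (FrobPow p e 𝔞 ^ m), ← mul_assoc]
end

section
/- Let R be a commutative ring of prime characteristic p, 𝔞 ⊆ R an ideal, and 0 ≤ e ≤ e' integers. If D^{(e)}·𝔞^n = D^{(e)}·𝔞^{n+1} then D^{(e')}·𝔞^n = D^{(e')}·𝔞^{n+1}, where D^{(e)}·J denotes the ideal generated by {δ(x) : δ an R^{p^e}-linear endomorphism of R, x ∈ J}. Consequently, the set of differential jumps of level e' is contained in that of level e. -/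
/-- A differential operator of level `e`: an `R^{p^e}`-linear endomorphism of `R`. -/
def IsDiffOp {R : Type*} [CommRing R] (p e : ℕ) (δ : R →+ R) : Prop :=
  ∀ c x : R, δ (c ^ p ^ e * x) = c ^ p ^ e * δ x

/-- The ideal `D^{(e)} · J` generated by the images of elements of `J` under all
differential operators of level `e`. -/
def DIdeal {R : Type*} [CommRing R] (p e : ℕ) (J : Ideal R) : Ideal R :=
  Ideal.span {y : R | ∃ δ : R →+ R, IsDiffOp p e δ ∧ ∃ x ∈ J, δ x = y}

lemma IsDiffOp.mono {R : Type*} [CommRing R] {p e e' : ℕ} {δ : R →+ R}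
    (h : IsDiffOp p e δ) (hee : e ≤ e') : IsDiffOp p e' δ := by
  intro c x
  have key : c ^ p ^ e' = (c ^ p ^ (e' - e)) ^ p ^ e := by
    rw [← pow_mul, ← pow_add, Nat.sub_add_cancel hee]
  rw [key, h]

lemma IsDiffOp.comp {R : Type*} [CommRing R] {p e : ℕ} {δ δ' : R →+ R}
    (h' : IsDiffOp p e δ') (h : IsDiffOp p e δ) : IsDiffOp p e (δ'.comp δ) := by
  intro c x
  simp [AddMonoidHom.comp_apply, h c x, h' c (δ x)]

lemma IsDiffOp.mulLeft {R : Type*} [CommRing R] (p e : ℕ) (r : R) :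
    IsDiffOp p e (AddMonoidHom.mulLeft r) := by
  intro c x
  simp [mul_left_comm]

lemma le_DIdeal {R : Type*} [CommRing R] (p e : ℕ) (J : Ideal R) : J ≤ DIdeal p e J := by
  intro x hx
  exact Ideal.subset_span ⟨AddMonoidHom.id R, fun c y => rfl, x, hx, rfl⟩

lemma DIdeal_mono {R : Type*} [CommRing R] (p e : ℕ) {J K : Ideal R} (h : J ≤ K) :
    DIdeal p e J ≤ DIdeal p e K :=
  Ideal.span_mono (by rintro y ⟨δ, hδ, x, hx, rfl⟩; exact ⟨δ, hδ, x, h hx, rfl⟩)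

lemma DIdeal_DIdeal_le {R : Type*} [CommRing R] (p : ℕ) {e e' : ℕ} (hee : e ≤ e')
    (J : Ideal R) : DIdeal p e' (DIdeal p e J) ≤ DIdeal p e' J := by
  have main : ∀ x ∈ DIdeal p e J, ∀ δ' : R →+ R, IsDiffOp p e' δ' →
      δ' x ∈ DIdeal p e' J := by
    intro x hx
    refine Submodule.span_induction ?_ ?_ ?_ ?_ hx
    · rintro y ⟨δ, hδ, a, ha, rfl⟩ δ' hδ'
      exact Ideal.subset_span ⟨δ'.comp δ, hδ'.comp (hδ.mono hee), a, ha, rfl⟩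
    · intro δ' _
      simp
    · intro y z _ _ ihy ihz δ' hδ'
      rw [map_add]
      exact add_mem (ihy δ' hδ') (ihz δ' hδ')
    · intro r y _ ih δ' hδ'
      have := ih (δ'.comp (AddMonoidHom.mulLeft r)) (hδ'.comp (IsDiffOp.mulLeft p e' r))
      simpa [smul_eq_mul] using this
  rw [DIdeal, Ideal.span_le]
  rintro y ⟨δ', hδ', x, hx, rfl⟩
  exact main x hx δ' hδ'

theorem stmt9 {R : Type*} [CommRing R] (p : ℕ) (hp : p.Prime) [CharP R p]
    (𝔞 : Ideal R) (e e' : ℕ) (hee : e ≤ e') :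
    (∀ n : ℕ, DIdeal p e (𝔞 ^ n) = DIdeal p e (𝔞 ^ (n + 1)) →
      DIdeal p e' (𝔞 ^ n) = DIdeal p e' (𝔞 ^ (n + 1))) ∧
    {n : ℕ | DIdeal p e' (𝔞 ^ n) ≠ DIdeal p e' (𝔞 ^ (n + 1))} ⊆
      {n : ℕ | DIdeal p e (𝔞 ^ n) ≠ DIdeal p e (𝔞 ^ (n + 1))} := by
  have main : ∀ n : ℕ, DIdeal p e (𝔞 ^ n) = DIdeal p e (𝔞 ^ (n + 1)) →
      DIdeal p e' (𝔞 ^ n) = DIdeal p e' (𝔞 ^ (n + 1)) := by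
    intro n h
    refine le_antisymm ?_ (DIdeal_mono p e' (Ideal.pow_le_pow_right (Nat.le_succ n)))
    calc DIdeal p e' (𝔞 ^ n) ≤ DIdeal p e' (DIdeal p e (𝔞 ^ n)) :=
          DIdeal_mono p e' (le_DIdeal p e _)
      _ = DIdeal p e' (DIdeal p e (𝔞 ^ (n + 1))) := by rw [h]
      _ ≤ DIdeal p e' (𝔞 ^ (n + 1)) := DIdeal_DIdeal_le p hee _
  exact ⟨main, fun n hn h => hn (main n h)⟩
end

section
/- Let R be a noetherian F-finite ring of characteristic p, 𝔞 ⊆ R an ideal generated by r elements, and e ≥ 0. If n ≥ r(p^e - 1) + 1 and D^{(e)}·𝔞^{n - p^e} = D^{(e)}·𝔞^{n - p^e + 1}, then D^{(e)}·𝔞^n = D^{(e)}·𝔞^{n+1}. Equivalently, if n ≥ r(p^e-1)+1 is a differential jump of level e, then so is n - p^e. -/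
/-- `R` is F-finite: `R` is a finitely generated module over its subring of
`p`-th powers. -/
def FFinite (p : ℕ) (R : Type*) [CommRing R] : Prop :=
  ∃ s : Finset R, ∀ x : R, ∃ c : R → R, x = ∑ y ∈ s, c y ^ p * y

/-- Pigeonhole factorization: `𝔞^n = 𝔞^{[q]} · 𝔞^{n-q}` for `n ≥ r(q-1)+1`. -/
lemma frobenius_pow_factor {R : Type*} [CommRing R] {r q n : ℕ} (hq : 1 ≤ q)
    (hn : r * (q - 1) + 1 ≤ n) (hqn : q ≤ n) (f : Fin r → R) :
    (Ideal.span (Set.range f)) ^ n =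
      Ideal.span (Set.range fun i => f i ^ q) * (Ideal.span (Set.range f)) ^ (n - q) := by
  set 𝔞 : Ideal R := Ideal.span (Set.range f) with h𝔞
  set 𝔟 : Ideal R := Ideal.span (Set.range fun i => f i ^ q) with h𝔟
  apply le_antisymm
  · rw [h𝔞, Ideal.span, Submodule.span_pow]
    rw [Submodule.span_le]
    intro x hx
    rw [Set.mem_pow] at hx
    obtain ⟨g, hg⟩ := hx
    -- choose indices
    have hgi : ∀ j : Fin n, ∃ i : Fin r, f i = (g j : R) := fun j => (g j).2
    choose G hG using hgi
    -- pigeonhole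
    have hpig : ∃ i ∈ (Finset.univ : Finset (Fin r)),
        q - 1 < (Finset.univ.filter fun j : Fin n => G j = i).card := by
      apply Finset.exists_lt_card_fiber_of_mul_lt_card_of_maps_to
        (fun a _ => Finset.mem_univ (G a))
      simpa using lt_of_lt_of_le (Nat.lt_succ_self _) hn
    obtain ⟨i, -, hile⟩ := hpig
    set F : Finset (Fin n) := Finset.univ.filter fun j : Fin n => G j = i with hF
    have hqc : q ≤ F.card := by omega
    have hcn : F.card ≤ n := by simpa using Finset.card_le_card (Finset.subset_univ F)
    have hx' : x = ∏ j : Fin n, f (G j) := by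
      rw [← hg, List.prod_ofFn]
      exact Finset.prod_congr rfl fun j _ => (hG j).symm
    have hsplit : x = f i ^ q * (f i ^ (F.card - q) *
        ∏ j ∈ Finset.univ.filter fun j : Fin n => ¬ G j = i, f (G j)) := by
      rw [hx', ← Finset.prod_filter_mul_prod_filter_not Finset.univ (fun j => G j = i)]
      have h1 : ∏ j ∈ F, f (G j) = f i ^ F.card := by
        rw [← Finset.prod_const]
        exact Finset.prod_congr rfl fun j hj => by
          rw [hF, Finset.mem_filter] at hj; rw [hj.2]
      rw [h1, ← mul_assoc, ← pow_add, Nat.add_sub_cancel' hqc]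
    rw [hsplit]
    have hmem1 : f i ^ q ∈ 𝔟 := Ideal.subset_span ⟨i, rfl⟩
    have hfi : f i ∈ 𝔞 := Ideal.subset_span ⟨i, rfl⟩
    have hmem2 : f i ^ (F.card - q) ∈ 𝔞 ^ (F.card - q) := Ideal.pow_mem_pow hfi _
    have hmem3 : (∏ j ∈ Finset.univ.filter fun j : Fin n => ¬ G j = i, f (G j)) ∈
        𝔞 ^ (Finset.univ.filter fun j : Fin n => ¬ G j = i).card := by
      rw [← Finset.prod_const]
      exact Ideal.prod_mem_prod fun j _ => Ideal.subset_span ⟨G j, rfl⟩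
    have hcard : (F.card - q) + (Finset.univ.filter fun j : Fin n => ¬ G j = i).card
        = n - q := by
      have := Finset.card_filter_add_card_filter_not
        (s := (Finset.univ : Finset (Fin n))) (p := fun j => G j = i)
      rw [← hF] at this
      simp only [Finset.card_univ, Fintype.card_fin] at this
      omega
    have : f i ^ (F.card - q) *
        (∏ j ∈ Finset.univ.filter fun j : Fin n => ¬ G j = i, f (G j)) ∈ 𝔞 ^ (n - q) := by
      rw [← hcard, pow_add]
      exact Ideal.mul_mem_mul hmem2 hmem3
    exact Ideal.mul_mem_mul hmem1 this
  · have h𝔟le : 𝔟 ≤ 𝔞 ^ q := by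
      rw [h𝔟, Ideal.span_le]
      rintro y ⟨i, rfl⟩
      show f i ^ q ∈ 𝔞 ^ q
      exact Ideal.pow_mem_pow (Ideal.subset_span (Set.mem_range_self i)) q
    calc 𝔟 * 𝔞 ^ (n - q) ≤ 𝔞 ^ q * 𝔞 ^ (n - q) := Ideal.mul_mono_left h𝔟le
      _ = 𝔞 ^ n := by rw [← pow_add, Nat.add_sub_cancel' hqn]

/-- `D^{(e)} (𝔞^{[p^e]} J) = 𝔞^{[p^e]} (D^{(e)} J)`. -/
lemma dIdeal_frobenius_mul {R : Type*} [CommRing R] (p e : ℕ) {r : ℕ} (f : Fin r → R)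
    (J : Ideal R) :
    DIdeal p e (Ideal.span (Set.range fun i => f i ^ p ^ e) * J) =
      Ideal.span (Set.range fun i => f i ^ p ^ e) * DIdeal p e J := by
  set 𝔟 : Ideal R := Ideal.span (Set.range fun i => f i ^ p ^ e) with h𝔟
  apply le_antisymm
  · rw [DIdeal, Ideal.span_le]
    rintro y ⟨δ, hδ, x, hx, rfl⟩
    have claim : ∀ b ∈ 𝔟, ∀ j ∈ J, δ (b * j) ∈ 𝔟 * DIdeal p e J := by
      intro b hb
      induction hb using Submodule.span_induction with
      | mem z hz =>
        obtain ⟨i, rfl⟩ := hz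
        intro j hj
        rw [hδ (f i) j]
        exact Ideal.mul_mem_mul (Ideal.subset_span ⟨i, rfl⟩)
          (Ideal.subset_span ⟨δ, hδ, j, hj, rfl⟩)
      | zero => intro j hj; simpa using (𝔟 * DIdeal p e J).zero_mem
      | add b₁ b₂ _ _ ih₁ ih₂ =>
        intro j hj
        rw [add_mul, map_add]; exact Ideal.add_mem _ (ih₁ j hj) (ih₂ j hj)
      | smul c b _ ih =>
        intro j hj
        have hcb : c • b * j = b * (c * j) := by rw [smul_eq_mul]; ring
        rw [hcb]
        exact ih (c * j) (J.mul_mem_left c hj)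
    refine Submodule.mul_induction_on hx claim ?_
    intro x₁ x₂ ih₁ ih₂
    rw [map_add]; exact Ideal.add_mem _ ih₁ ih₂
  · rw [Ideal.mul_le]
    intro b hb d hd
    induction hd using Submodule.span_induction with
    | mem z hz =>
      obtain ⟨δ, hδ, x, hx, rfl⟩ := hz
      induction hb using Submodule.span_induction with
      | mem w hw =>
        obtain ⟨i, rfl⟩ := hw
        have : f i ^ p ^ e * δ x = δ (f i ^ p ^ e * x) := (hδ (f i) x).symm
        rw [this]
        exact Ideal.subset_span ⟨δ, hδ, f i ^ p ^ e * x,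
          Ideal.mul_mem_mul (Ideal.subset_span ⟨i, rfl⟩) hx, rfl⟩
      | zero => simpa using (DIdeal p e (𝔟 * J)).zero_mem
      | add b₁ b₂ _ _ ih₁ ih₂ => rw [add_mul]; exact Ideal.add_mem _ ih₁ ih₂
      | smul c b _ ih =>
        have : (c • b) * δ x = c * (b * δ x) := by rw [smul_eq_mul]; ring
        rw [this]; exact Ideal.mul_mem_left _ c ih
    | zero => simpa using (DIdeal p e (𝔟 * J)).zero_mem
    | add d₁ d₂ _ _ ih₁ ih₂ => rw [mul_add]; exact Ideal.add_mem _ ih₁ ih₂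
    | smul c d _ ih =>
      have : b * (c • d) = c * (b * d) := by rw [smul_eq_mul]; ring
      rw [this]; exact Ideal.mul_mem_left _ c ih

theorem stmt10 {R : Type*} [CommRing R] (p : ℕ) (hp : p.Prime) [CharP R p]
    [IsNoetherianRing R] (hFF : FFinite p R)
    (r : ℕ) (f : Fin r → R) (𝔞 : Ideal R) (h𝔞 : 𝔞 = Ideal.span (Set.range f))
    (e n : ℕ) (hn : r * (p ^ e - 1) + 1 ≤ n)
    (h : DIdeal p e (𝔞 ^ (n - p ^ e)) = DIdeal p e (𝔞 ^ (n - p ^ e + 1))) :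
    DIdeal p e (𝔞 ^ n) = DIdeal p e (𝔞 ^ (n + 1)) := by
  subst h𝔞
  rcases Nat.eq_zero_or_pos r with hr | hr
  · subst hr
    have hbot : Ideal.span (Set.range f) = ⊥ := by
      rw [Set.range_eq_empty, Ideal.span_empty]
    have h1 : 1 ≤ n := by omega
    rw [hbot, ← Ideal.zero_eq_bot, zero_pow (by omega : n ≠ 0),
      zero_pow (by omega : n + 1 ≠ 0)]
  · set q := p ^ e with hqdef
    have hq1 : 1 ≤ q := Nat.one_le_pow _ _ hp.pos
    have hqn : q ≤ n := by
      have : 1 * (q - 1) + 1 ≤ r * (q - 1) + 1 :=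
        Nat.add_le_add_right (Nat.mul_le_mul_right _ hr) 1
      omega
    have e1 := frobenius_pow_factor hq1 hn hqn f
    have e2 := frobenius_pow_factor hq1 (le_trans hn (Nat.le_succ n))
      (le_trans hqn (Nat.le_succ n)) f
    have hsub : n + 1 - q = n - q + 1 := Nat.succ_sub hqn
    rw [e1, e2, hsub, dIdeal_frobenius_mul, dIdeal_frobenius_mul, h]
end

section
/- Let p be a prime and let C denote the ring of continuous functions from the p-adic integers ℤ_p to the discrete field 𝔽_p. For e ≥ 0, let C^e ⊆ C be the subring of functions constant on residue classes mod p^e. Then the 𝔽_p-algebra map from 𝔽_p[x₀,…,x_{e-1}]/(x_i^p - x_i : 0 ≤ i < e) to C^e sending x_i to the function α ↦ (i-th p-adic digit of α) is an isomorphism. -/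
open MvPolynomial Finset

section Aux

/-! ### Auxiliary lemmas on natural number digits -/

private lemma nat_sum_lt_pow {b : ℕ} (hb : 1 < b) (f : ℕ → ℕ) (hf : ∀ j, f j < b) :
    ∀ e, (∑ j ∈ range e, f j * b ^ j) < b ^ e := by
  intro e
  induction e with
  | zero => simp
  | succ e ih =>
    rw [Finset.sum_range_succ]
    have h1 : f e * b ^ e ≤ (b - 1) * b ^ e := by
      have := hf e; exact Nat.mul_le_mul_right _ (by omega)
    have h2 : b ^ (e+1) = b * b ^ e := by ring
    have h3 : (b-1) * b ^ e = b * b ^ e - b ^ e := by rw [Nat.sub_one_mul]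
    have h4 : b ^ e ≤ b * b ^ e := Nat.le_mul_of_pos_left _ (by omega)
    omega

private lemma nat_digit_eq {b : ℕ} (hb : 1 < b) (f : ℕ → ℕ) (hf : ∀ j, f j < b)
    {e i : ℕ} (hi : i < e) :
    ((∑ j ∈ range e, f j * b ^ j) / b ^ i) % b = f i := by
  obtain ⟨k, rfl⟩ : ∃ k, e = i + (k + 1) := ⟨e - i - 1, by omega⟩
  rw [Finset.sum_range_add]
  have hA : (∑ j ∈ range i, f j * b ^ j) < b ^ i := nat_sum_lt_pow hb f hf i
  have hrw : (∑ j ∈ range (k+1), f (i + j) * b ^ (i + j))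
      = b ^ i * (∑ j ∈ range (k+1), f (i + j) * b ^ j) := by
    rw [Finset.mul_sum]; apply Finset.sum_congr rfl; intro j _; rw [pow_add]; ring
  rw [hrw, Nat.add_mul_div_left _ _ (pow_pos (by omega : 0 < b) i),
    Nat.div_eq_of_lt hA, zero_add]
  rw [Finset.sum_range_succ' (fun j => f (i + j) * b ^ j)]
  simp only [pow_zero, mul_one, add_zero]
  have : (∑ j ∈ range k, f (i + (j+1)) * b ^ (j+1)) = b * ∑ j ∈ range k, f (i + (j+1)) * b ^ j := by
    rw [Finset.mul_sum]; apply Finset.sum_congr rfl; intro j _; ring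
  rw [this, add_comm, Nat.add_mul_mod_self_left, Nat.mod_eq_of_lt (hf i)]

private lemma nat_eq_sum_digits {b : ℕ} (hb : 1 < b) :
    ∀ e n, n < b ^ e → (∑ j ∈ range e, (n / b ^ j % b) * b ^ j) = n := by
  intro e
  induction e with
  | zero =>
    intro n hn
    simp only [pow_zero, Nat.lt_one_iff] at hn
    subst hn; simp
  | succ e ih =>
    intro n hn
    rw [Finset.sum_range_succ' (fun j => (n / b ^ j % b) * b ^ j)]
    simp only [pow_zero, Nat.div_one, mul_one]
    have h1 : ∀ j, n / b ^ (j+1) = (n / b) / b ^ j := by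
      intro j; rw [Nat.div_div_eq_div_mul, pow_succ']
    have h2 : (∑ j ∈ range e, (n / b ^ (j+1) % b) * b ^ (j+1))
        = b * ∑ j ∈ range e, ((n / b) / b ^ j % b) * b ^ j := by
      rw [Finset.mul_sum]; apply Finset.sum_congr rfl; intro j _; rw [h1]; ring
    have hnb : n / b < b ^ e := by
      rw [Nat.div_lt_iff_lt_mul (by omega)]
      calc n < b ^ (e+1) := hn
      _ = b ^ e * b := by ring
    rw [h2, ih _ hnb, Nat.div_add_mod]

end Aux

/-- The `i`-th p-adic digit of `α ∈ ℤ_p`, as an element of `𝔽_p = ZMod p`. -/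
noncomputable def padicDigit (p : ℕ) [Fact p.Prime] (i : ℕ) (α : ℤ_[p]) : ZMod p :=
  ((α.appr (i + 1) / p ^ i) % p : ℕ)

section Digits

variable {p : ℕ} [hp : Fact p.Prime]

private lemma appr_sub_dvd (α : ℤ_[p]) (n : ℕ) : (p : ℤ_[p]) ^ n ∣ α - α.appr n :=
  Ideal.mem_span_singleton.mp (α.appr_spec n)

private lemma padicDigit_eq (i : ℕ) (α : ℤ_[p]) (a : ℕ) (h : (p : ℤ_[p]) ^ (i+1) ∣ α - a) :
    padicDigit p i α = ((a / p ^ i % p : ℕ) : ZMod p) := by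
  set b := α.appr (i+1) with hb
  have h1 : (p : ℤ_[p]) ^ (i+1) ∣ α - b := appr_sub_dvd α (i+1)
  have h2 : (p : ℤ_[p]) ^ (i+1) ∣ (((b : ℤ) - (a : ℤ) : ℤ) : ℤ_[p]) := by
    push_cast
    have : ((b : ℤ_[p]) - a) = (α - a) - (α - b) := by ring
    rw [this]
    exact dvd_sub h h1
  have h3 : ((p : ℤ) ^ (i+1)) ∣ ((b : ℤ) - a) := (PadicInt.pow_p_dvd_int_iff _ _).mp h2
  have h4 : a ≡ b [MOD p ^ (i+1)] := by
    rw [Nat.modEq_iff_dvd]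
    exact_mod_cast h3
  have h5 : b = a % p ^ (i+1) := by
    have := h4.symm
    unfold Nat.ModEq at this
    rw [Nat.mod_eq_of_lt (α.appr_lt (i+1))] at this
    exact this
  have hlt : b / p ^ i < p := by
    rw [Nat.div_lt_iff_lt_mul (pow_pos hp.out.pos i), ← pow_succ']
    exact α.appr_lt (i+1)
  have h6 : b / p ^ i % p = a / p ^ i % p := by
    calc b / p ^ i % p = b / p ^ i := Nat.mod_eq_of_lt hlt
      _ = a % (p ^ i * p) / p ^ i := by rw [h5, pow_succ]
      _ = a / p ^ i % p := Nat.mod_mul_right_div_self _ _ _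
  rw [padicDigit, h6]

private lemma padicDigit_const {i e : ℕ} (hi : i < e) (α β : ℤ_[p])
    (h : (p : ℤ_[p]) ^ e ∣ α - β) :
    padicDigit p i α = padicDigit p i β := by
  have h1 : (p : ℤ_[p]) ^ (i+1) ∣ α - β := dvd_trans (pow_dvd_pow _ hi) h
  have h2 : (p : ℤ_[p]) ^ (i+1) ∣ β - β.appr (i+1) := appr_sub_dvd β (i+1)
  have h3 : (p : ℤ_[p]) ^ (i+1) ∣ α - β.appr (i+1) := by
    have : α - (β.appr (i+1) : ℤ_[p]) = (α - β) + (β - β.appr (i+1)) := by ring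
    rw [this]; exact dvd_add h1 h2
  rw [padicDigit_eq i α _ h3, padicDigit_eq i β _ h2]

private lemma padicDigit_natCast {e : ℕ} (v : Fin e → ZMod p) (i : Fin e) :
    padicDigit p i ((((∑ j : Fin e, (v j).val * p ^ (j : ℕ) : ℕ)) : ℤ_[p])) = v i := by
  classical
  set f : ℕ → ℕ := fun j => if h : j < e then (v ⟨j, h⟩).val else 0 with hf
  have hflt : ∀ j, f j < p := by
    intro j; rw [hf]; dsimp only
    split
    · exact ZMod.val_lt _
    · exact hp.out.pos
  have hN : (∑ j : Fin e, (v j).val * p ^ (j : ℕ)) = ∑ j ∈ range e, f j * p ^ j := by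
    rw [Finset.sum_range (fun j => f j * p ^ j)]
    apply Finset.sum_congr rfl
    intro j _
    rw [hf]; dsimp only; rw [dif_pos j.isLt]
  rw [hN]
  have h0 : (p : ℤ_[p]) ^ ((i : ℕ)+1) ∣
      ((((∑ j ∈ range e, f j * p ^ j : ℕ)) : ℤ_[p]) - ((∑ j ∈ range e, f j * p ^ j : ℕ))) := by
    simp
  rw [padicDigit_eq _ _ _ h0, nat_digit_eq hp.out.one_lt f hflt i.isLt]
  rw [hf]; dsimp only; rw [dif_pos i.isLt]
  simp [ZMod.natCast_val, ZMod.cast_id]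

private lemma sum_digits_appr (α : ℤ_[p]) (e : ℕ) :
    (∑ j : Fin e, (padicDigit p (j : ℕ) α).val * p ^ (j : ℕ)) = α.appr e := by
  rw [← Finset.sum_range (fun j => (padicDigit p j α).val * p ^ j)]
  have key : ∀ j ∈ range e, (padicDigit p j α).val * p ^ j
      = (α.appr e / p ^ j % p) * p ^ j := by
    intro j hj
    rw [mem_range] at hj
    have h1 : (p : ℤ_[p]) ^ (j+1) ∣ α - α.appr e :=
      dvd_trans (pow_dvd_pow _ hj) (appr_sub_dvd α e)
    rw [padicDigit_eq j α _ h1, ZMod.val_natCast_of_lt (Nat.mod_lt _ hp.out.pos)]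
  rw [Finset.sum_congr rfl key, nat_eq_sum_digits hp.out.one_lt e _ (α.appr_lt e)]

private lemma sub_sum_digits_dvd (α : ℤ_[p]) (e : ℕ) :
    (p : ℤ_[p]) ^ e ∣
      α - ((∑ j : Fin e, (padicDigit p (j : ℕ) α).val * p ^ (j : ℕ) : ℕ)) := by
  rw [sum_digits_appr]
  exact appr_sub_dvd α e

end Digits

section Reduction

variable {p : ℕ} [hp : Fact p.Prime] {e : ℕ}

private lemma monomial_reduce :
    ∀ (N : ℕ) (d : Fin e →₀ ℕ), (∑ j, d j) = N → ∀ c : ZMod p,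
      ∃ Q ∈ restrictDegree (Fin e) (ZMod p) (p - 1),
        (monomial d c : MvPolynomial (Fin e) (ZMod p)) - Q ∈
          Ideal.span {q : MvPolynomial (Fin e) (ZMod p) | ∃ i : Fin e, q = X i ^ p - X i} := by
  intro N
  induction N using Nat.strong_induction_on with
  | _ N ih =>
    intro d hd c
    have hp2 : 2 ≤ p := hp.out.two_le
    by_cases hsmall : ∀ i, d i ≤ p - 1
    · refine ⟨monomial d c, ?_, by simp⟩
      rw [mem_restrictDegree]
      intro s hs i
      classical
      rw [support_monomial] at hs
      split at hs
      · simp at hs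
      · rw [Finset.mem_singleton] at hs
        subst hs
        exact hsmall i
    · push_neg at hsmall
      obtain ⟨i, hi⟩ := hsmall
      have hpi : p ≤ d i := by omega
      set d₁ : Fin e →₀ ℕ := d - Finsupp.single i p with hd₁
      set d₂ : Fin e →₀ ℕ := d₁ + Finsupp.single i 1 with hd₂
      have hkey : d₁ + Finsupp.single i p = d :=
        tsub_add_cancel_of_le (Finsupp.single_le_iff.mpr hpi)
      have hd2i : d₂ i = d i - p + 1 := by
        rw [hd₂, hd₁]
        simp [Finsupp.tsub_apply]
      have hd2j : ∀ j, j ≠ i → d₂ j = d j := by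
        intro j hj
        rw [hd₂, hd₁]
        simp [Finsupp.tsub_apply, Finsupp.single_apply, Ne.symm hj]
      have hM : (∑ j, d₂ j) < N := by
        rw [← hd]
        apply Finset.sum_lt_sum
        · intro j _
          by_cases hji : j = i
          · subst hji; omega
          · rw [hd2j j hji]
        · exact ⟨i, Finset.mem_univ i, by omega⟩
      obtain ⟨Q, hQ, hQI⟩ := ih _ hM d₂ rfl c
      refine ⟨Q, hQ, ?_⟩
      have hfac : (monomial d c : MvPolynomial (Fin e) (ZMod p)) - monomial d₂ c
          = monomial d₁ c * (X i ^ p - X i) := by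
        rw [mul_sub, X_pow_eq_monomial,
          show (X i : MvPolynomial (Fin e) (ZMod p)) = monomial (Finsupp.single i 1) 1 from rfl,
          monomial_mul, monomial_mul, mul_one, hkey, hd₂]
      have hmem : (monomial d c : MvPolynomial (Fin e) (ZMod p)) - monomial d₂ c ∈
          Ideal.span {q : MvPolynomial (Fin e) (ZMod p) | ∃ i : Fin e, q = X i ^ p - X i} := by
        rw [hfac]
        exact Ideal.mul_mem_left _ _ (Ideal.subset_span ⟨i, rfl⟩)
      have : (monomial d c : MvPolynomial (Fin e) (ZMod p)) - Q
          = ((monomial d c - monomial d₂ c) + (monomial d₂ c - Q)) := by ring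
      rw [this]
      exact Ideal.add_mem _ hmem hQI

private lemma poly_reduce (P : MvPolynomial (Fin e) (ZMod p)) :
    ∃ Q ∈ restrictDegree (Fin e) (ZMod p) (p - 1),
      P - Q ∈
        Ideal.span {q : MvPolynomial (Fin e) (ZMod p) | ∃ i : Fin e, q = X i ^ p - X i} := by
  induction P using MvPolynomial.induction_on' with
  | monomial d c => exact monomial_reduce _ d rfl c
  | add P₁ P₂ ih₁ ih₂ =>
    obtain ⟨Q₁, hQ₁, hI₁⟩ := ih₁
    obtain ⟨Q₂, hQ₂, hI₂⟩ := ih₂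
    refine ⟨Q₁ + Q₂, Submodule.add_mem _ hQ₁ hQ₂, ?_⟩
    have : P₁ + P₂ - (Q₁ + Q₂) = (P₁ - Q₁) + (P₂ - Q₂) := by ring
    rw [this]
    exact Ideal.add_mem _ hI₁ hI₂

end Reduction

theorem stmt13 (p : ℕ) [Fact p.Prime] (e : ℕ) :
    -- `ψ` sends `x_i` to the `i`-th digit function
    ∀ ψ : MvPolynomial (Fin e) (ZMod p) →ₐ[ZMod p] (ℤ_[p] → ZMod p),
      ψ = aeval (fun i : Fin e => fun α : ℤ_[p] => padicDigit p i α) →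
    -- `C^e` : functions constant on residue classes mod `p^e`
    ∀ Ce : Set (ℤ_[p] → ZMod p),
      Ce = {g | ∀ α β : ℤ_[p], ‖α - β‖ ≤ (p : ℝ) ^ (-(e : ℤ)) → g α = g β} →
    -- `ψ` induces an isomorphism onto `C^e` with kernel `(x_i^p - x_i)`
    (∀ P, ψ P ∈ Ce) ∧
    (∀ g ∈ Ce, ∃ P, ψ P = g) ∧
    (∀ P, ψ P = 0 ↔
      P ∈ Ideal.span {q : MvPolynomial (Fin e) (ZMod p) | ∃ i : Fin e, q = X i ^ p - X i}) := by
  intro ψ hψ Ce hCe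
  subst hψ hCe
  classical
  -- evaluation description of `ψ`
  have h_eval : ∀ (P : MvPolynomial (Fin e) (ZMod p)) (α : ℤ_[p]),
      aeval (fun i : Fin e => fun β : ℤ_[p] => padicDigit p i β) P α
        = eval (fun i : Fin e => padicDigit p i α) P := by
    intro P α
    have h1 : (Pi.evalAlgHom (ZMod p) (fun _ : ℤ_[p] => ZMod p) α).comp
        (aeval (fun i : Fin e => fun β : ℤ_[p] => padicDigit p i β))
        = aeval (fun i : Fin e => padicDigit p i α) :=
      comp_aeval _ _
    have h2 := congrArg (fun φ => φ P) h1
    simp only [AlgHom.comp_apply, Pi.evalAlgHom_apply] at h2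
    rw [h2]
    exact DFunLike.congr_fun (coe_aeval_eq_eval _) P
  -- norm condition ↔ divisibility
  have h_dvd : ∀ α β : ℤ_[p], ‖α - β‖ ≤ (p : ℝ) ^ (-(e : ℤ)) ↔ (p : ℤ_[p]) ^ e ∣ α - β := by
    intro α β
    rw [show (-(e : ℤ)) = (-e : ℤ) from rfl, PadicInt.norm_le_pow_iff_mem_span_pow,
      Ideal.mem_span_singleton]
  -- part 1
  have part1 : ∀ P : MvPolynomial (Fin e) (ZMod p),
      (aeval (fun i : Fin e => fun β : ℤ_[p] => padicDigit p i β) P : ℤ_[p] → ZMod p) ∈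
        {g : ℤ_[p] → ZMod p | ∀ α β : ℤ_[p], ‖α - β‖ ≤ (p : ℝ) ^ (-(e : ℤ)) → g α = g β} := by
    intro P α β hnorm
    have hdvd := (h_dvd α β).mp hnorm
    have hdig : (fun i : Fin e => padicDigit p i α) = fun i : Fin e => padicDigit p i β :=
      funext fun i => padicDigit_const i.isLt α β hdvd
    rw [h_eval, h_eval, hdig]
  refine ⟨part1, ?_, ?_⟩
  · -- surjectivity onto `C^e`
    intro g hg
    set N : (Fin e → ZMod p) → ℕ := fun v => ∑ j : Fin e, (v j).val * p ^ (j : ℕ) with hNdef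
    set P : MvPolynomial (Fin e) (ZMod p) :=
      ∑ v : Fin e → ZMod p, C (g ((N v : ℤ_[p]))) * indicator v with hPdef
    refine ⟨P, ?_⟩
    funext α
    set w : Fin e → ZMod p := fun i => padicDigit p i α with hw
    have h3 : eval w P = g ((N w : ℤ_[p])) := by
      rw [hPdef]
      rw [map_sum]
      rw [Finset.sum_eq_single w]
      · rw [map_mul, eval_C, eval_indicator_apply_eq_one, mul_one]
      · intro v _ hv
        rw [map_mul, eval_C, eval_indicator_apply_eq_zero w v (Ne.symm hv), mul_zero]
      · intro h; exact absurd (Finset.mem_univ w) h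
    have h4 : g ((N w : ℤ_[p])) = g α := by
      apply hg
      rw [h_dvd]
      have := sub_sum_digits_dvd α e
      have heq : ((∑ j : Fin e, (padicDigit p (j : ℕ) α).val * p ^ (j : ℕ) : ℕ) : ℤ_[p])
          = ((N w : ℕ) : ℤ_[p]) := by
        rw [hNdef]
      rw [heq] at this
      have : (p : ℤ_[p]) ^ e ∣ ((N w : ℤ_[p]) - α) := by
        have hneg : ((N w : ℤ_[p]) - α) = -(α - ((N w : ℕ) : ℤ_[p])) := by ring
        rw [hneg]
        exact Dvd.dvd.neg_right this
      exact this
    rw [h_eval P α, ← hw, h3, h4]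
  · -- kernel
    intro P
    constructor
    · intro h0
      have heval0 : ∀ v : Fin e → ZMod p, eval v P = 0 := by
        intro v
        have hv : (fun i : Fin e =>
            padicDigit p i (((∑ j : Fin e, (v j).val * p ^ (j : ℕ) : ℕ) : ℤ_[p]))) = v :=
          funext fun i => padicDigit_natCast v i
        have h5 := h_eval P (((∑ j : Fin e, (v j).val * p ^ (j : ℕ) : ℕ) : ℤ_[p]))
        rw [h0, hv] at h5
        exact h5.symm
      obtain ⟨Q, hQ, hI⟩ := poly_reduce P
      have hIeval : ∀ v : Fin e → ZMod p, eval v (P - Q) = 0 := by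
        intro v
        have hker : Ideal.span {q : MvPolynomial (Fin e) (ZMod p) | ∃ i : Fin e,
            q = X i ^ p - X i} ≤ RingHom.ker (eval v) := by
          rw [Ideal.span_le]
          rintro q ⟨i, rfl⟩
          rw [SetLike.mem_coe, RingHom.mem_ker, map_sub, map_pow, eval_X, ZMod.pow_card,
            sub_self]
        exact hker hI
      have hQ0 : Q = 0 := by
        apply MvPolynomial.eq_zero_of_eval_eq_zero
        · intro v
          have := hIeval v
          rw [map_sub, heval0 v, zero_sub, neg_eq_zero] at this
          exact this
        · rwa [ZMod.card]
      rw [hQ0, sub_zero] at hI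
      exact hI
    · intro hmem
      set ψ' := aeval (R := ZMod p)
        (fun i : Fin e => fun β : ℤ_[p] => padicDigit p i β) with hψ'
      have hker : Ideal.span {q : MvPolynomial (Fin e) (ZMod p) | ∃ i : Fin e,
          q = X i ^ p - X i} ≤ RingHom.ker ψ'.toRingHom := by
        rw [Ideal.span_le]
        rintro q ⟨i, rfl⟩
        rw [SetLike.mem_coe, RingHom.mem_ker]
        have : ψ'.toRingHom (X i ^ p - X i) = (ψ' (X i)) ^ p - ψ' (X i) := by
          simp [map_sub, map_pow]
        rw [this]
        funext α
        simp only [Pi.sub_apply, Pi.pow_apply, Pi.zero_apply]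
        rw [ZMod.pow_card, sub_self]
      exact hker hmem
end

section
/- Let p be prime, C = Cont(ℤ_p, 𝔽_p), and M a C-module. If M/𝔪_α M = 0 for every α ∈ ℤ_p (where 𝔪_α is the maximal ideal of functions vanishing at α), then M = 0. -/
/-- Evaluation at a point, as a ring homomorphism on the ring `C = Cont(ℤ_p, 𝔽_p)`
of continuous (= locally constant) functions from `ℤ_p` to the discrete field `𝔽_p`. -/
noncomputable def evC (p : ℕ) [Fact p.Prime] (α : ℤ_[p]) :
    LocallyConstant ℤ_[p] (ZMod p) →+* ZMod p where
  toFun φ := φ α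
  map_one' := rfl
  map_mul' _ _ := rfl
  map_zero' := rfl
  map_add' _ _ := rfl

lemma toZModPow_eq_iff (p : ℕ) [Fact p.Prime] (n : ℕ) (x y : ℤ_[p]) :
    PadicInt.toZModPow n x = PadicInt.toZModPow n y ↔ ‖x - y‖ ≤ (p : ℝ) ^ (-n : ℤ) := by
  rw [← sub_eq_zero, ← map_sub, ← RingHom.mem_ker, PadicInt.ker_toZModPow,
    ← PadicInt.norm_le_pow_iff_mem_span_pow]

lemma toZModPow_isLocallyConstant (p : ℕ) [Fact p.Prime] (n : ℕ) :
    IsLocallyConstant (fun x : ℤ_[p] => PadicInt.toZModPow n x) := by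
  rw [IsLocallyConstant.iff_eventually_eq]
  intro x
  have hmem : Metric.closedBall x ((p : ℝ) ^ (-n : ℤ)) ∈ nhds x :=
    Metric.closedBall_mem_nhds x (by
      have : 0 < (p : ℝ) := by exact_mod_cast (Fact.out : p.Prime).pos
      positivity)
  filter_upwards [hmem] with y hy
  rw [toZModPow_eq_iff]
  simpa [Metric.mem_closedBall, dist_eq_norm] using hy

/-- Indicator (as a locally constant function) of the fiber of `toZModPow n` over `c`. -/
noncomputable def chi (p : ℕ) [Fact p.Prime] (n : ℕ) (c : ZMod (p ^ n)) :
    LocallyConstant ℤ_[p] (ZMod p) :=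
  ⟨fun x => if PadicInt.toZModPow n x = c then 1 else 0,
    (toZModPow_isLocallyConstant p n).comp fun d => if d = c then (1 : ZMod p) else 0⟩

lemma chi_apply (p : ℕ) [Fact p.Prime] (n : ℕ) (c : ZMod (p ^ n)) (x : ℤ_[p]) :
    chi p n c x = if PadicInt.toZModPow n x = c then 1 else 0 := rfl

lemma chi_sum (p : ℕ) [Fact p.Prime] (n : ℕ) :
    (∑ c : ZMod (p ^ n), chi p n c) = 1 := by
  ext x
  have hc : ((∑ c : ZMod (p ^ n), chi p n c : LocallyConstant ℤ_[p] (ZMod p)) : ℤ_[p] → ZMod p)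
      = ∑ c : ZMod (p ^ n), ⇑(chi p n c) :=
    map_sum (LocallyConstant.coeFnAddMonoidHom (X := ℤ_[p]) (Y := ZMod p)) _ _
  show ((∑ c : ZMod (p ^ n), chi p n c : LocallyConstant ℤ_[p] (ZMod p)) : ℤ_[p] → ZMod p) x = _
  rw [hc, Finset.sum_apply]
  simp only [chi_apply, LocallyConstant.coe_one, Pi.one_apply]
  rw [Finset.sum_ite_eq (Finset.univ) (PadicInt.toZModPow n x) (fun _ => (1 : ZMod p))]
  simp

lemma chi_mul_chi (p : ℕ) [Fact p.Prime] {m n : ℕ} (hmn : m ≤ n) (c : ZMod (p ^ n))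
    (x0 : ℤ_[p]) (hx0 : PadicInt.toZModPow n x0 = c) :
    chi p n c * chi p m (PadicInt.toZModPow m x0) = chi p n c := by
  ext x
  rw [LocallyConstant.coe_mul, Pi.mul_apply]
  show ((if _ then _ else _) * (if _ then _ else _) : ZMod p) = _
  by_cases hx : PadicInt.toZModPow n x = c
  · have : PadicInt.toZModPow m x = PadicInt.toZModPow m x0 := by
      rw [← PadicInt.cast_toZModPow m n hmn x, hx, ← hx0, PadicInt.cast_toZModPow m n hmn x0]
    simp [hx, this, chi_apply]
  · simp [hx, chi_apply]

lemma chi_mul_vanish (p : ℕ) [Fact p.Prime] (α : ℤ_[p]) (f : LocallyConstant ℤ_[p] (ZMod p))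
    (hf : f α = 0) : ∃ n : ℕ, chi p n (PadicInt.toZModPow n α) * f = 0 := by
  have hev := f.isLocallyConstant.eventually_eq α
  rw [Metric.eventually_nhds_iff] at hev
  obtain ⟨ε, hε, hball⟩ := hev
  obtain ⟨n, hn⟩ := PadicInt.exists_pow_neg_lt p hε
  refine ⟨n, ?_⟩
  ext x
  rw [LocallyConstant.coe_mul, Pi.mul_apply, chi_apply]
  by_cases hx : PadicInt.toZModPow n x = PadicInt.toZModPow n α
  · have hd : dist x α < ε := by
      rw [toZModPow_eq_iff] at hx
      rw [dist_eq_norm]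
      exact lt_of_le_of_lt hx hn
    have : f x = 0 := by have := hball hd; simp only [LocallyConstant.toFun_eq_coe] at this; rw [this, hf]
    simp [hx, this]
  · simp [hx]

theorem stmt15 (p : ℕ) [Fact p.Prime] (M : Type*) [AddCommGroup M]
    [Module (LocallyConstant ℤ_[p] (ZMod p)) M]
    (h : ∀ α : ℤ_[p],
      (RingHom.ker (evC p α) •
        (⊤ : Submodule (LocallyConstant ℤ_[p] (ZMod p)) M)) = ⊤) :
    Subsingleton M := by
  refine subsingleton_of_forall_eq 0 fun u => ?_
  -- Step A: for every α there is n with `chi p n (toZModPow n α) • u = 0`.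
  have stepA : ∀ α : ℤ_[p], ∃ n : ℕ, chi p n (PadicInt.toZModPow n α) • u = 0 := by
    intro α
    have hu : u ∈ (RingHom.ker (evC p α) •
        (⊤ : Submodule (LocallyConstant ℤ_[p] (ZMod p)) M)) := by
      rw [h α]; trivial
    refine Submodule.smul_induction_on hu ?_ ?_
    · intro f hf m _
      have hfα : f α = 0 := hf
      obtain ⟨n, hn⟩ := chi_mul_vanish p α f hfα
      exact ⟨n, by rw [smul_smul, hn, zero_smul]⟩
    · rintro u1 u2 ⟨n1, h1⟩ ⟨n2, h2⟩
      refine ⟨max n1 n2, ?_⟩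
      have k1 : chi p (max n1 n2) (PadicInt.toZModPow (max n1 n2) α) • u1 = 0 := by
        rw [← chi_mul_chi p (le_max_left n1 n2) _ α rfl, mul_smul, h1, smul_zero]
      have k2 : chi p (max n1 n2) (PadicInt.toZModPow (max n1 n2) α) • u2 = 0 := by
        rw [← chi_mul_chi p (le_max_right n1 n2) _ α rfl, mul_smul, h2, smul_zero]
      rw [smul_add, k1, k2, add_zero]
  -- Step B: compactness.
  choose n hn using stepA
  set U : ℤ_[p] → Set ℤ_[p] :=
    fun α => {x | PadicInt.toZModPow (n α) x = PadicInt.toZModPow (n α) α} with hU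
  have hUopen : ∀ α, IsOpen (U α) := fun α =>
    (toZModPow_isLocallyConstant p (n α)).isOpen_fiber _
  have hUcover : (Set.univ : Set ℤ_[p]) ⊆ ⋃ α, U α := fun x _ =>
    Set.mem_iUnion.2 ⟨x, rfl⟩
  obtain ⟨t, ht⟩ := isCompact_univ.elim_finite_subcover U hUopen hUcover
  set N : ℕ := t.sup n with hN
  have key : ∀ c : ZMod (p ^ N), chi p N c • u = 0 := by
    intro c
    by_cases hc : ∃ x : ℤ_[p], PadicInt.toZModPow N x = c
    · obtain ⟨x, hx⟩ := hc
      obtain ⟨α, hαt, hxα⟩ : ∃ α ∈ t, x ∈ U α := by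
        have := ht (Set.mem_univ x)
        simpa using this
      have hxa : PadicInt.toZModPow (n α) x = PadicInt.toZModPow (n α) α := hxα
      have hmn : n α ≤ N := Finset.le_sup hαt
      calc chi p N c • u
          = (chi p N c * chi p (n α) (PadicInt.toZModPow (n α) x)) • u := by
            rw [chi_mul_chi p hmn c x hx]
        _ = chi p N c • (chi p (n α) (PadicInt.toZModPow (n α) α) • u) := by
            rw [mul_smul, hxa]
        _ = 0 := by rw [hn α, smul_zero]
    · have : chi p N c = 0 := by
        ext x
        rw [chi_apply]
        push_neg at hc
        simp [hc x]
      rw [this, zero_smul]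
  calc u = (1 : LocallyConstant ℤ_[p] (ZMod p)) • u := (one_smul _ _).symm
    _ = (∑ c : ZMod (p ^ N), chi p N c) • u := by rw [chi_sum]
    _ = ∑ c : ZMod (p ^ N), chi p N c • u := Finset.sum_smul
    _ = 0 := by simp [key]
end

section
/- Let p be prime and C = Cont(ℤ_p, 𝔽_p). Let M be a C-module such that M_α := M/𝔪_α M is nonzero for only finitely many α ∈ ℤ_p, say α₁,…,α_n. Then the natural map M → ⊕_{i=1}^n M_{α_i} is an isomorphism, and under it M_{α_i} is identified with the annihilator Ann_M(𝔪_{α_i}). -/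
namespace Stmt16Aux

variable {p : ℕ} [Fact p.Prime]

/-- If `g β = 0` there is `φ` with `φ β = 1` and `φ * g = 0` (indicator of zero set of `g`). -/
lemma exists_ann (g : LocallyConstant ℤ_[p] (ZMod p)) {β : ℤ_[p]} (hg : g β = 0) :
    ∃ φ : LocallyConstant ℤ_[p] (ZMod p), φ β = 1 ∧ φ * g = 0 := by
  have hU : IsClopen {x | g x = 0} := g.isLocallyConstant.isClopen_fiber 0
  refine ⟨LocallyConstant.charFn (ZMod p) hU, ?_, ?_⟩
  · exact (LocallyConstant.charFn_eq_one (ZMod p) β hU).mpr hg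
  · ext x
    show LocallyConstant.charFn (ZMod p) hU x * g x = 0
    by_cases hx : g x = 0
    · rw [hx, mul_zero]
    · rw [(LocallyConstant.charFn_eq_zero (ZMod p) x hU).mpr hx, zero_mul]

/-- Separating a point from a finite set by a locally constant function. -/
lemma exists_sep {β : ℤ_[p]} {S : Finset ℤ_[p]} (hβ : β ∉ S) :
    ∃ φ : LocallyConstant ℤ_[p] (ZMod p), φ β = 1 ∧ ∀ γ ∈ S, φ γ = 0 := by
  classical
  induction S using Finset.induction with
  | empty => exact ⟨1, rfl, by simp⟩
  | @insert γ S hγS ih =>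
    obtain ⟨φ, hφ1, hφ0⟩ := ih (fun h => hβ (Finset.mem_insert_of_mem h))
    have hβγ : β ≠ γ := fun h => hβ (h ▸ Finset.mem_insert_self γ S)
    obtain ⟨U, hU, hβU, hγU⟩ := exists_isClopen_of_totally_separated hβγ
    refine ⟨φ * LocallyConstant.charFn (ZMod p) hU, ?_, ?_⟩
    · show φ β * LocallyConstant.charFn (ZMod p) hU β = 1
      rw [hφ1, (LocallyConstant.charFn_eq_one (ZMod p) β hU).mpr hβU, one_mul]
    · intro δ hδ
      rcases Finset.mem_insert.mp hδ with rfl | hδS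
      · show φ δ * LocallyConstant.charFn (ZMod p) hU δ = 0
        rw [(LocallyConstant.charFn_eq_zero (ZMod p) δ hU).mpr hγU, mul_zero]
      · show φ δ * LocallyConstant.charFn (ZMod p) hU δ = 0
        rw [hφ0 δ hδS, zero_mul]

variable {M : Type*} [AddCommGroup M] [Module (LocallyConstant ℤ_[p] (ZMod p)) M]

/-- Every element of `𝔪_β M` is annihilated by some `φ` with `φ β = 1`. -/
lemma exists_ann_of_mem_smul {β : ℤ_[p]} {x : M}
    (hx : x ∈ (RingHom.ker (evC p β) •
      (⊤ : Submodule (LocallyConstant ℤ_[p] (ZMod p)) M))) :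
    ∃ φ : LocallyConstant ℤ_[p] (ZMod p), φ β = 1 ∧ φ • x = 0 := by
  refine Submodule.smul_induction_on hx ?_ ?_
  · intro c hc m _
    obtain ⟨φ, h1, h2⟩ := exists_ann c (show c β = 0 from hc)
    exact ⟨φ, h1, by rw [smul_smul, h2, zero_smul]⟩
  · rintro x y ⟨φ₁, hφ₁, hx'⟩ ⟨φ₂, hφ₂, hy'⟩
    refine ⟨φ₁ * φ₂, by show φ₁ β * φ₂ β = 1; rw [hφ₁, hφ₂, one_mul], ?_⟩
    have e1 : (φ₁ * φ₂) • x = 0 := by rw [mul_comm, mul_smul, hx', smul_zero]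
    have e2 : (φ₁ * φ₂) • y = 0 := by rw [mul_smul, hy', smul_zero]
    rw [smul_add, e1, e2, add_zero]

/-- If `x` is locally annihilated everywhere, then `x = 0` (compactness of `ℤ_p`). -/
lemma eq_zero_of_ann {x : M}
    (h : ∀ β : ℤ_[p], ∃ φ : LocallyConstant ℤ_[p] (ZMod p), φ β ≠ 0 ∧ φ • x = 0) :
    x = 0 := by
  classical
  choose φ h1 h2 using h
  have hopen : ∀ β : ℤ_[p], IsOpen {γ | φ β γ ≠ 0} := fun β =>
    ((φ β).isLocallyConstant.isClopen_fiber 0).compl.isOpen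
  have hcov : (Set.univ : Set ℤ_[p]) ⊆ ⋃ β, {γ | φ β γ ≠ 0} :=
    fun β _ => Set.mem_iUnion.2 ⟨β, h1 β⟩
  obtain ⟨t, ht⟩ := isCompact_univ.elim_finite_subcover _ hopen hcov
  set g : LocallyConstant ℤ_[p] (ZMod p) := ∏ β ∈ t, (1 - (φ β) ^ (p - 1)) with hg
  have hg0 : g = 0 := by
    ext γ
    obtain ⟨β, hβt, hβγ⟩ : ∃ β ∈ t, φ β γ ≠ 0 := by
      simpa using ht (Set.mem_univ γ)
    show evC p γ g = 0
    rw [hg, map_prod]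
    refine Finset.prod_eq_zero hβt ?_
    show (1 - (φ β) ^ (p - 1)) γ = 0
    show 1 - (φ β γ) ^ (p - 1) = 0
    rw [ZMod.pow_card_sub_one_eq_one hβγ, sub_self]
  have hfix : ∀ β : ℤ_[p], (1 - (φ β) ^ (p - 1)) • x = x := by
    intro β
    have hp2 : 2 ≤ p := (Fact.out : p.Prime).two_le
    obtain ⟨k, hk⟩ : ∃ k, p - 1 = k + 1 := ⟨p - 2, by omega⟩
    have hpow : (φ β) ^ (p - 1) • x = 0 := by
      rw [hk, pow_succ, mul_smul, h2, smul_zero]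
    rw [sub_smul, one_smul, hpow, sub_zero]
  have hgen : ∀ s : Finset ℤ_[p], (∏ β ∈ s, (1 - (φ β) ^ (p - 1))) • x = x := by
    intro s
    induction s using Finset.cons_induction with
    | empty => simp
    | cons a s ha ih => rw [Finset.prod_cons, mul_smul, ih, hfix]
  have hgx : g • x = x := hgen t
  rw [← hgx, hg0, zero_smul]

end Stmt16Aux

open Stmt16Aux in
theorem stmt16 (p : ℕ) [Fact p.Prime] (M : Type*) [AddCommGroup M]
    [Module (LocallyConstant ℤ_[p] (ZMod p)) M]
    (n : ℕ) (α : Fin n → ℤ_[p]) (hinj : Function.Injective α)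
    -- the fibers `M_β` vanish away from the `α i` …
    (hzero : ∀ β : ℤ_[p], β ∉ Set.range α →
      (RingHom.ker (evC p β) •
        (⊤ : Submodule (LocallyConstant ℤ_[p] (ZMod p)) M)) = ⊤)
    -- … and are nonzero at each `α i`
    (hnezero : ∀ i : Fin n,
      (RingHom.ker (evC p (α i)) •
        (⊤ : Submodule (LocallyConstant ℤ_[p] (ZMod p)) M)) ≠ ⊤) :
    -- the natural map `M → ⊕ᵢ M/𝔪_{αᵢ}M` is an isomorphism …
    Function.Bijective (fun m : M => fun i : Fin n =>
      Submodule.Quotient.mk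
        (p := RingHom.ker (evC p (α i)) •
          (⊤ : Submodule (LocallyConstant ℤ_[p] (ZMod p)) M)) m) ∧
    -- … identifying `M/𝔪_{αᵢ}M` with `Ann_M(𝔪_{αᵢ})`
    (∀ i : Fin n, Function.Bijective
      (fun m : {x : M // ∀ c ∈ RingHom.ker (evC p (α i)), c • x = 0} =>
        Submodule.Quotient.mk
          (p := RingHom.ker (evC p (α i)) •
            (⊤ : Submodule (LocallyConstant ℤ_[p] (ZMod p)) M)) (m : M))) := by
  classical
  set 𝔫 : Fin n → Submodule (LocallyConstant ℤ_[p] (ZMod p)) M :=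
    fun i => RingHom.ker (evC p (α i)) • ⊤ with h𝔫
  -- choose separating functions f i with f i (α i) = 1, f i (α j) = 0 for j ≠ i
  have hsep : ∀ i : Fin n, ∃ f : LocallyConstant ℤ_[p] (ZMod p),
      f (α i) = 1 ∧ ∀ j : Fin n, j ≠ i → f (α j) = 0 := by
    intro i
    have hαi : α i ∉ (Finset.univ.erase i).image α := by
      simp only [Finset.mem_image, Finset.mem_erase]
      rintro ⟨j, ⟨hj, -⟩, hji⟩
      exact hj (hinj hji)
    obtain ⟨f, hf1, hf0⟩ := exists_sep hαi
    exact ⟨f, hf1, fun j hj => hf0 _ (Finset.mem_image_of_mem α (by simp [hj]))⟩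
  choose f hf1 hf0 using hsep
  -- key vanishing: for c ∈ 𝔪_{α i}, (c * f i) • m = 0
  have hkey : ∀ (i : Fin n) (c : LocallyConstant ℤ_[p] (ZMod p)), c (α i) = 0 →
      ∀ m : M, (c * f i) • m = 0 := by
    intro i c hc m
    apply eq_zero_of_ann (p := p)
    intro β
    by_cases hβ : (c * f i) β = 0
    · obtain ⟨φ, hφ1, hφ0⟩ := exists_ann _ hβ
      exact ⟨φ, by rw [hφ1]; exact one_ne_zero, by rw [smul_smul, hφ0, zero_smul]⟩
    · have hβr : β ∉ Set.range α := by
        rintro ⟨j, rfl⟩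
        rcases eq_or_ne j i with rfl | hj
        · exact hβ (by show c (α j) * f j (α j) = 0; rw [hc, zero_mul])
        · exact hβ (by show c (α j) * f i (α j) = 0; rw [hf0 i j hj, mul_zero])
      have hmem : ((c * f i) • m) ∈ RingHom.ker (evC p β) •
          (⊤ : Submodule (LocallyConstant ℤ_[p] (ZMod p)) M) :=
        (hzero β hβr).symm ▸ Submodule.mem_top
      obtain ⟨φ, hφ1, hφ0⟩ := exists_ann_of_mem_smul hmem
      exact ⟨φ, by rw [hφ1]; exact one_ne_zero, hφ0⟩
  -- an element lying in every 𝔫 i is zero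
  have hmainzero : ∀ x : M, (∀ i : Fin n, x ∈ 𝔫 i) → x = 0 := by
    intro x hx
    apply eq_zero_of_ann (p := p)
    intro β
    by_cases hβ : β ∈ Set.range α
    · obtain ⟨i, rfl⟩ := hβ
      obtain ⟨φ, hφ1, hφ0⟩ := exists_ann_of_mem_smul (hx i)
      exact ⟨φ, by rw [hφ1]; exact one_ne_zero, hφ0⟩
    · have hx' : x ∈ RingHom.ker (evC p β) •
          (⊤ : Submodule (LocallyConstant ℤ_[p] (ZMod p)) M) :=
        (hzero β hβ).symm ▸ Submodule.mem_top
      obtain ⟨φ, hφ1, hφ0⟩ := exists_ann_of_mem_smul hx'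
      exact ⟨φ, by rw [hφ1]; exact one_ne_zero, hφ0⟩
  have hfker : ∀ i : Fin n, (f i - 1) ∈ RingHom.ker (evC p (α i)) := by
    intro i
    show (f i - 1) (α i) = 0
    show f i (α i) - 1 = 0
    rw [hf1, sub_self]
  refine ⟨⟨?_, ?_⟩, fun i => ⟨?_, ?_⟩⟩
  · -- injectivity of the main map
    intro m₁ m₂ h
    have hsub : ∀ i : Fin n, m₁ - m₂ ∈ 𝔫 i := fun i =>
      (Submodule.Quotient.eq _).mp (congrFun h i)
    have := hmainzero _ hsub
    exact sub_eq_zero.mp this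
  · -- surjectivity of the main map
    intro v
    have := fun i => Submodule.Quotient.mk_surjective (𝔫 i) (v i)
    choose m hm using this
    refine ⟨∑ j, f j • m j, funext fun i => ?_⟩
    rw [← hm i]
    show Submodule.Quotient.mk (∑ j, f j • m j) = Submodule.Quotient.mk (m i)
    rw [Submodule.Quotient.eq]
    have hsum : (∑ j, f j • m j) - m i
        = (f i - 1) • m i + ∑ j ∈ Finset.univ.erase i, f j • m j := by
      rw [← Finset.add_sum_erase _ _ (Finset.mem_univ i), sub_smul, one_smul]
      abel
    rw [hsum]
    refine Submodule.add_mem _ (Submodule.smul_mem_smul (hfker i) Submodule.mem_top)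
      (Submodule.sum_mem _ ?_)
    intro j hj
    have hji : j ≠ i := (Finset.mem_erase.mp hj).1
    exact Submodule.smul_mem_smul (show f j ∈ RingHom.ker (evC p (α i)) from hf0 j i hji.symm)
      Submodule.mem_top
  · -- injectivity of the annihilator map
    rintro ⟨m₁, hm₁⟩ ⟨m₂, hm₂⟩ h
    have hd : m₁ - m₂ ∈ 𝔫 i := (Submodule.Quotient.eq _).mp h
    have hdz : m₁ - m₂ = 0 := by
      apply eq_zero_of_ann (p := p)
      intro β
      by_cases hβ : β = α i
      · subst hβ
        obtain ⟨φ, hφ1, hφ0⟩ := exists_ann_of_mem_smul hd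
        exact ⟨φ, by rw [hφ1]; exact one_ne_zero, hφ0⟩
      · have : α i ∉ ({β}ᶜ : Set ℤ_[p]) → True := fun _ => trivial
        obtain ⟨φ, hφ1, hφ0⟩ := exists_sep (S := {α i}) (by simpa using hβ)
        have hker : φ ∈ RingHom.ker (evC p (α i)) :=
          show φ (α i) = 0 from hφ0 _ (Finset.mem_singleton_self _)
        refine ⟨φ, by rw [hφ1]; exact one_ne_zero, ?_⟩
        rw [smul_sub, hm₁ φ hker, hm₂ φ hker, sub_zero]
    exact Subtype.ext (sub_eq_zero.mp hdz)
  · -- surjectivity of the annihilator map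
    intro q
    obtain ⟨m, hm⟩ := Submodule.Quotient.mk_surjective (𝔫 i) q
    refine ⟨⟨f i • m, ?_⟩, ?_⟩
    · intro c hc
      rw [smul_smul]
      exact hkey i c (show c (α i) = 0 from hc) m
    · show Submodule.Quotient.mk (f i • m) = q
      rw [← hm, Submodule.Quotient.eq]
      have : f i • m - m = (f i - 1) • m := by rw [sub_smul, one_smul]
      rw [this]
      exact Submodule.smul_mem_smul (hfker i) Submodule.mem_top
end

section
/- Let R be an F-finite F-split ring of characteristic p and 𝔞 ⊆ R a proper ideal generated by r elements such that the set of differential thresholds of 𝔞 is discrete in ℝ (equivalently, finite in every bounded interval). Then 𝔞 is Bernstein-Sato admissible: there is a constant C such that for every e ≥ 0 the number of differential jumps of level e of 𝔞 in [0, r·p^e) is at most C. -/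
open Filter

/-- `n` is a differential jump of level `e` of `𝔞`. -/
def IsDiffJump {R : Type*} [CommRing R] (p : ℕ) (𝔞 : Ideal R) (e n : ℕ) : Prop :=
  DIdeal p e (𝔞 ^ n) ≠ DIdeal p e (𝔞 ^ (n + 1))

/-- `λ` is a differential threshold of `𝔞`: a real limit of `ν_e / p^e` for
differential jumps `ν_e` of level `e`. -/
def IsDiffThreshold {R : Type*} [CommRing R] (p : ℕ) (𝔞 : Ideal R) (l : ℝ) : Prop :=
  0 ≤ l ∧ ∃ ν : ℕ → ℕ, (∀ e, IsDiffJump p 𝔞 e (ν e)) ∧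
    Tendsto (fun e => (ν e : ℝ) / (p : ℝ) ^ e) atTop (nhds l)

/-- `R` is F-split. -/
def FSplit (p : ℕ) (R : Type*) [CommRing R] : Prop :=
  ∃ σ : R →+ R, σ 1 = 1 ∧ ∀ c x : R, σ (c ^ p * x) = c * σ x

section Aux
variable {R : Type*} [CommRing R] {p : ℕ}

lemma dideal_mono {e : ℕ} {J J' : Ideal R} (h : J ≤ J') : DIdeal p e J ≤ DIdeal p e J' :=
  Ideal.span_mono (fun y ⟨δ, hδ, x, hx, hxy⟩ => ⟨δ, hδ, x, h hx, hxy⟩)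

lemma mem_dideal {e : ℕ} {J : Ideal R} {δ : R →+ R} (hδ : IsDiffOp p e δ) {x : R}
    (hx : x ∈ J) : δ x ∈ DIdeal p e J :=
  Ideal.subset_span ⟨δ, hδ, x, hx, rfl⟩

lemma isDiffOp_id (e : ℕ) : IsDiffOp p e (AddMonoidHom.id R) := fun _ _ => rfl

lemma dideal_top (e : ℕ) : DIdeal p e (⊤ : Ideal R) = ⊤ := by
  rw [Ideal.eq_top_iff_one]
  simpa using mem_dideal (p := p) (isDiffOp_id e) (Submodule.mem_top (x := (1 : R)))

lemma isDiffOp_of_le {e e' : ℕ} (h : e ≤ e') {δ : R →+ R} (hδ : IsDiffOp p e δ) :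
    IsDiffOp p e' δ := by
  intro c x
  have : c ^ p ^ e' = (c ^ p ^ (e' - e)) ^ p ^ e := by
    rw [← pow_mul, ← pow_add, Nat.sub_add_cancel h]
  rw [this, hδ]

lemma dideal_level_mono {e e' : ℕ} (h : e ≤ e') (J : Ideal R) :
    DIdeal p e J ≤ DIdeal p e' J :=
  Ideal.span_mono (fun y ⟨δ, hδ, x, hx, hxy⟩ => ⟨δ, isDiffOp_of_le h hδ, x, hx, hxy⟩)

lemma isDiffOp_mulLeft_comp {e : ℕ} (a : R) {δ : R →+ R} (hδ : IsDiffOp p e δ) :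
    IsDiffOp p e ((AddMonoidHom.mulLeft a).comp δ) := by
  intro c x
  have hm : ∀ y : R, (AddMonoidHom.mulLeft a) y = a * y := fun _ => rfl
  simp only [AddMonoidHom.comp_apply, hm]
  rw [hδ c x]
  ring

lemma isDiffOp_comp_mulLeft {e : ℕ} (a : R) {δ : R →+ R} (hδ : IsDiffOp p e δ) :
    IsDiffOp p e (δ.comp (AddMonoidHom.mulLeft a)) := by
  intro c x
  have hm : ∀ y : R, (AddMonoidHom.mulLeft a) y = a * y := fun _ => rfl
  simp only [AddMonoidHom.comp_apply, hm]
  rw [show a * (c ^ p ^ e * x) = c ^ p ^ e * (a * x) by ring, hδ]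

end Aux

section Frob
variable {R : Type*} [CommRing R] {p : ℕ}

/-- Frobenius as an additive map. -/
noncomputable def frobAdd (hp : p.Prime) (R : Type*) [CommRing R] [CharP R p] : R →+ R :=
  haveI : ExpChar R p := ExpChar.prime hp
  (frobenius R p).toAddMonoidHom

lemma frobAdd_apply (hp : p.Prime) [CharP R p] (x : R) : frobAdd hp R x = x ^ p := rfl

lemma sigma_pow_p {σ : R →+ R} (hσ : ∀ c x : R, σ (c ^ p * x) = c * σ x)
    (hσ1 : σ 1 = 1) (x : R) : σ (x ^ p) = x := by
  have := hσ x 1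
  rwa [mul_one, hσ1, mul_one] at this

lemma isDiffOp_frob_comp (hp : p.Prime) [CharP R p] {σ : R →+ R}
    (hσ : ∀ c x : R, σ (c ^ p * x) = c * σ x) {e : ℕ} {δ : R →+ R} (hδ : IsDiffOp p e δ) :
    IsDiffOp p (e + 1) ((frobAdd hp R).comp (δ.comp σ)) := by
  intro c x
  have h1 : c ^ p ^ (e + 1) = (c ^ p ^ e) ^ p := by rw [← pow_mul, pow_succ]
  simp only [AddMonoidHom.comp_apply, frobAdd_apply]
  rw [h1, hσ, hδ, mul_pow]

lemma isDiffOp_comp_frob (hp : p.Prime) [CharP R p] {σ : R →+ R}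
    (hσ : ∀ c x : R, σ (c ^ p * x) = c * σ x) {e : ℕ} {δ : R →+ R}
    (hδ : IsDiffOp p (e + 1) δ) :
    IsDiffOp p e ((σ.comp δ).comp (frobAdd hp R)) := by
  intro c x
  simp only [AddMonoidHom.comp_apply, frobAdd_apply]
  have h1 : (c ^ p ^ e * x) ^ p = (c ^ p ^ e) ^ p * x ^ p := mul_pow _ _ _
  have h2 : (c ^ p ^ e) ^ p = c ^ p ^ (e + 1) := by rw [← pow_mul, pow_succ]
  rw [h1, h2, hδ, ← h2, hσ]

/-- Descent: if `y ∈ D^{(e+1)} · span {z^p : z ∈ I}` then `σ y ∈ D^{(e)} · I`. -/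
lemma dideal_descent (hp : p.Prime) [CharP R p] {σ : R →+ R}
    (hσ : ∀ c x : R, σ (c ^ p * x) = c * σ x) {e : ℕ} {I : Ideal R} {y : R}
    (hy : y ∈ DIdeal p (e + 1) (Ideal.span {w : R | ∃ z ∈ I, z ^ p = w})) :
    σ y ∈ DIdeal p e I := by
  have hQ : ∀ z ∈ Ideal.span {w : R | ∃ z ∈ I, z ^ p = w},
      ∀ δ : R →+ R, IsDiffOp p (e + 1) δ → σ (δ z) ∈ DIdeal p e I := by
    intro z hz
    refine Submodule.span_induction ?_ ?_ ?_ ?_ hz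
    · rintro w ⟨z, hzI, rfl⟩ δ hδ
      exact mem_dideal (isDiffOp_comp_frob hp hσ hδ) hzI
    · intro δ hδ
      simp only [map_zero]
      exact (DIdeal p e I).zero_mem
    · intro a b _ _ ha hb δ hδ
      simp only [map_add]
      exact (DIdeal p e I).add_mem (ha δ hδ) (hb δ hδ)
    · intro a b _ hb δ hδ
      have h : δ (a • b) = (δ.comp (AddMonoidHom.mulLeft a)) b := rfl
      rw [h]
      exact hb _ (isDiffOp_comp_mulLeft a hδ)
  have hP : ∀ a : R, σ (a * y) ∈ DIdeal p e I := by
    refine Submodule.span_induction ?_ ?_ ?_ ?_ hy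
    · rintro w ⟨δ, hδ, x, hx, rfl⟩ a
      have h : a * δ x = ((AddMonoidHom.mulLeft a).comp δ) x := rfl
      rw [h]
      exact hQ x hx _ (isDiffOp_mulLeft_comp a hδ)
    · intro a
      simp only [mul_zero, map_zero]
      exact (DIdeal p e I).zero_mem
    · intro u v _ _ hu hv a
      rw [mul_add, map_add]
      exact (DIdeal p e I).add_mem (hu a) (hv a)
    · intro b u _ hu a
      rw [smul_eq_mul, show a * (b * u) = (a * b) * u by ring]
      exact hu (a * b)
  simpa using hP 1

/-- Ascent. -/
lemma dideal_ascent (hp : p.Prime) [CharP R p] {σ : R →+ R}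
    (hσ : ∀ c x : R, σ (c ^ p * x) = c * σ x) (hσ1 : σ 1 = 1) {e : ℕ} {δ : R →+ R}
    (hδ : IsDiffOp p e δ) {x : R} {J' : Ideal R} (hx : x ^ p ∈ J') :
    (δ x) ^ p ∈ DIdeal p (e + 1) J' := by
  have h := mem_dideal (isDiffOp_frob_comp hp hσ hδ) hx
  simpa only [AddMonoidHom.comp_apply, frobAdd_apply, sigma_pow_p hσ hσ1] using h

end Frob

section Monomial
variable {R : Type*} [CommRing R] {r : ℕ} (f : Fin r → R)

lemma prod_pow_mem_span_pow (b : Fin r → ℕ) :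
    (∏ i, f i ^ b i) ∈ (Ideal.span (Set.range f)) ^ (∑ i, b i) := by
  classical
  have : ∀ s : Finset (Fin r), (∏ i ∈ s, f i ^ b i) ∈ (Ideal.span (Set.range f)) ^ (∑ i ∈ s, b i) := by
    intro s
    induction s using Finset.induction_on with
    | empty => simp
    | insert _ _ hni ih =>
      rw [Finset.prod_insert hni, Finset.sum_insert hni, pow_add]
      exact Ideal.mul_mem_mul (Ideal.pow_mem_pow (Ideal.subset_span (Set.mem_range_self _)) _) ih
  exact this Finset.univ

lemma span_pow_le_monomials (N : ℕ) :
    (Ideal.span (Set.range f)) ^ N ≤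
      Ideal.span {w : R | ∃ a : Fin r → ℕ, (∑ i, a i) = N ∧ (∏ i, f i ^ a i) = w} := by
  classical
  induction N with
  | zero =>
    rw [pow_zero, Ideal.one_eq_top]
    intro x _
    have h1 : (1 : R) ∈ Ideal.span {w : R | ∃ a : Fin r → ℕ, (∑ i, a i) = 0 ∧ (∏ i, f i ^ a i) = w} :=
      Ideal.subset_span ⟨fun _ => 0, by simp, by simp⟩
    simpa using Ideal.mul_mem_left _ x h1
  | succ N ih =>
    rw [pow_succ]
    refine le_trans (Ideal.mul_mono ih le_rfl) ?_
    rw [Ideal.span_mul_span']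
    rw [Ideal.span_le]
    intro x hx
    rw [Set.mem_mul] at hx
    obtain ⟨w, ⟨a, ha, rfl⟩, y, ⟨i, rfl⟩, rfl⟩ := hx
    refine Ideal.subset_span ⟨fun j => a j + (if j = i then 1 else 0), ?_, ?_⟩
    · rw [Finset.sum_add_distrib, ha]
      simp
    · simp only [pow_add, Finset.prod_mul_distrib]
      congr 1
      rw [Finset.prod_eq_single i]
      · simp
      · intro j _ hj
        rw [if_neg hj, pow_zero]
      · simp

end Monomial

lemma pow_le_span_frob {R : Type*} [CommRing R] {r p : ℕ} (hp : 0 < p) (f : Fin r → R) (k : ℕ) :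
    (Ideal.span (Set.range f)) ^ (p * k + r * (p - 1)) ≤
      Ideal.span {w : R | ∃ z ∈ (Ideal.span (Set.range f)) ^ k, z ^ p = w} := by
  classical
  refine le_trans (span_pow_le_monomials f _) (Ideal.span_le.2 ?_)
  rintro w ⟨a, ha, rfl⟩
  have hsum : k ≤ ∑ i, a i / p := by
    have h2 : ∑ i, a i % p ≤ r * (p - 1) := by
      calc ∑ i, a i % p ≤ ∑ _i : Fin r, (p - 1) :=
            Finset.sum_le_sum (fun i _ => Nat.le_pred_of_lt (Nat.mod_lt _ hp))
        _ = r * (p - 1) := by simp [Finset.sum_const, mul_comm]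
    have h3 : p * (∑ i, a i / p) + ∑ i, a i % p = p * k + r * (p - 1) := by
      rw [Finset.mul_sum, ← Finset.sum_add_distrib, ← ha]
      exact Finset.sum_congr rfl (fun i _ => Nat.div_add_mod _ _)
    have : p * k ≤ p * (∑ i, a i / p) := by omega
    exact Nat.le_of_mul_le_mul_left this hp
  have hz : (∏ i, f i ^ (a i / p)) ∈ (Ideal.span (Set.range f)) ^ k :=
    Ideal.pow_le_pow_right hsum (prod_pow_mem_span_pow f _)
  have hfac : (∏ i, f i ^ a i) = (∏ i, f i ^ (a i / p)) ^ p * ∏ i, f i ^ (a i % p) := by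
    rw [← Finset.prod_pow, ← Finset.prod_mul_distrib]
    refine Finset.prod_congr rfl (fun i _ => ?_)
    rw [← pow_mul, ← pow_add, Nat.div_add_mod']
  rw [hfac]
  exact Ideal.mul_mem_right _ _ (Ideal.subset_span ⟨_, hz, rfl⟩)

lemma dideal_chain_eq {R : Type*} [CommRing R] {p : ℕ} {𝔞 : Ideal R} {e A : ℕ} (t : ℕ)
    (h : ∀ m, A ≤ m → m < A + t → DIdeal p e (𝔞 ^ m) = DIdeal p e (𝔞 ^ (m + 1))) :
    DIdeal p e (𝔞 ^ A) = DIdeal p e (𝔞 ^ (A + t)) := by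
  induction t with
  | zero => rfl
  | succ t ih =>
    rw [ih (fun m hm hm' => h m hm (by omega)), show A + (t + 1) = (A + t) + 1 from rfl]
    exact h (A + t) (by omega) (by omega)

lemma step_lemma {R : Type*} [CommRing R] {p : ℕ} (hp : p.Prime) [CharP R p] {σ : R →+ R}
    (hσ1 : σ 1 = 1) (hσ : ∀ c x : R, σ (c ^ p * x) = c * σ x) {r : ℕ} (f : Fin r → R)
    {e n : ℕ} (hj : IsDiffJump p (Ideal.span (Set.range f)) e n) :
    ∃ m : ℕ, p * n ≤ m ∧ m ≤ p * n + (r + 1) * (p - 1) ∧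
      IsDiffJump p (Ideal.span (Set.range f)) (e + 1) m := by
  set 𝔞 := Ideal.span (Set.range f) with h𝔞
  by_contra hcon
  push_neg at hcon
  have heq : ∀ m, p * n ≤ m → m ≤ p * n + (r + 1) * (p - 1) →
      DIdeal p (e + 1) (𝔞 ^ m) = DIdeal p (e + 1) (𝔞 ^ (m + 1)) := by
    intro m h1 h2
    by_contra hne
    exact (hcon m h1 h2) hne
  have hchain : DIdeal p (e + 1) (𝔞 ^ (p * n)) =
      DIdeal p (e + 1) (𝔞 ^ (p * n + ((r + 1) * (p - 1) + 1))) :=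
    dideal_chain_eq _ (fun m hm hm' => heq m hm (by omega))
  have hple : 1 ≤ p := hp.one_lt.le
  have hexp : p * n + ((r + 1) * (p - 1) + 1) = p * (n + 1) + r * (p - 1) := by
    have := hp.one_lt
    cases p with
    | zero => omega
    | succ q => ring_nf; omega
  have hsub : DIdeal p (e + 1) (𝔞 ^ (p * n)) ≤
      DIdeal p (e + 1) (Ideal.span {w : R | ∃ z ∈ 𝔞 ^ (n + 1), z ^ p = w}) := by
    rw [hchain, hexp]
    exact dideal_mono (pow_le_span_frob hp.pos f (n + 1))
  -- now show D^(e) 𝔞^n ≤ D^(e) 𝔞^(n+1)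
  apply hj
  apply le_antisymm
  · rw [DIdeal, Ideal.span_le]
    rintro y ⟨δ, hδ, x, hx, rfl⟩
    have hxp : x ^ p ∈ 𝔞 ^ (p * n) := by
      rw [mul_comm, pow_mul]
      exact Ideal.pow_mem_pow hx p
    have h1 : (δ x) ^ p ∈ DIdeal p (e + 1) (𝔞 ^ (p * n)) :=
      dideal_ascent hp hσ hσ1 hδ hxp
    have h2 := hsub h1
    have h3 := dideal_descent hp hσ h2
    rwa [sigma_pow_p hσ hσ1] at h3
  · exact dideal_mono (Ideal.pow_le_pow_right (by omega))

lemma dideal_pow_antitone {R : Type*} [CommRing R] {p e : ℕ} {𝔞 : Ideal R} {m n : ℕ}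
    (h : m ≤ n) : DIdeal p e (𝔞 ^ n) ≤ DIdeal p e (𝔞 ^ m) :=
  dideal_mono (Ideal.pow_le_pow_right h)

lemma jump_down {R : Type*} [CommRing R] {p : ℕ} {𝔞 : Ideal R} {e m : ℕ}
    (hj : IsDiffJump p 𝔞 (e + 1) m) : ∃ n, n ≤ m ∧ IsDiffJump p 𝔞 e n := by
  have hne : DIdeal p e (𝔞 ^ (m + 1)) ≠ ⊤ := by
    intro htop
    apply hj
    have h1 : DIdeal p (e + 1) (𝔞 ^ (m + 1)) = ⊤ :=
      top_le_iff.mp (htop ▸ dideal_level_mono (Nat.le_succ e) (𝔞 ^ (m + 1)))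
    have h2 : DIdeal p (e + 1) (𝔞 ^ m) = ⊤ :=
      top_le_iff.mp (h1 ▸ dideal_pow_antitone (Nat.le_succ m))
    rw [h1, h2]
  by_contra hcon
  push_neg at hcon
  apply hne
  have : DIdeal p e (𝔞 ^ 0) = DIdeal p e (𝔞 ^ (0 + (m + 1))) :=
    dideal_chain_eq (m + 1) (fun n hn hn' => by
      by_contra hne'
      exact (hcon n (by omega)) hne')
  rw [show (0 : ℕ) + (m + 1) = m + 1 from by omega] at this
  rw [← this, pow_zero, Ideal.one_eq_top, dideal_top]


lemma jump_to_threshold {R : Type*} [CommRing R] {p : ℕ} (hp : p.Prime) [CharP R p]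
    {σ : R →+ R} (hσ1 : σ 1 = 1) (hσ : ∀ c x : R, σ (c ^ p * x) = c * σ x)
    {r : ℕ} (f : Fin r → R) {e n : ℕ}
    (hj : IsDiffJump p (Ideal.span (Set.range f)) e n) :
    ∃ l : ℝ, IsDiffThreshold p (Ideal.span (Set.range f)) l ∧
      (n : ℝ) / (p : ℝ) ^ e ≤ l ∧ l ≤ ((n : ℝ) + r + 1) / (p : ℝ) ^ e := by
  set 𝔞 := Ideal.span (Set.range f) with h𝔞
  set c : ℕ := (r + 1) * (p - 1) with hc
  -- step function with choice
  have step' : ∀ k m : ℕ, ∃ m' : ℕ, IsDiffJump p 𝔞 (e + k) m →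
      (IsDiffJump p 𝔞 (e + k + 1) m' ∧ p * m ≤ m' ∧ m' ≤ p * m + c) := by
    intro k m
    by_cases h : IsDiffJump p 𝔞 (e + k) m
    · obtain ⟨m', h1, h2, h3⟩ := step_lemma hp hσ1 hσ f h
      exact ⟨m', fun _ => ⟨h3, h1, h2⟩⟩
    · exact ⟨0, fun h' => absurd h' h⟩
  choose F hF using step'
  set g : ℕ → ℕ := fun k => Nat.rec n (fun k gk => F k gk) k with hg
  have hg0 : g 0 = n := rfl
  have hgsucc : ∀ k, g (k + 1) = F k (g k) := fun k => rfl
  have hgjump : ∀ k, IsDiffJump p 𝔞 (e + k) (g k) := by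
    intro k
    induction k with
    | zero => exact hj
    | succ k ih => rw [hgsucc]; exact (hF k (g k) ih).1
  have hbd : ∀ k, p * g k ≤ g (k + 1) ∧ g (k + 1) ≤ p * g k + c := by
    intro k
    rw [hgsucc]
    exact ⟨(hF k (g k) (hgjump k)).2.1, (hF k (g k) (hgjump k)).2.2⟩
  -- real sequence
  set P : ℝ := (p : ℝ) with hP
  have hP1 : (1 : ℝ) < P := by rw [hP]; exact_mod_cast hp.one_lt
  have hP0 : (0 : ℝ) < P := lt_trans one_pos hP1
  have hPpow : ∀ k : ℕ, (0 : ℝ) < P ^ k := fun k => pow_pos hP0 k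
  set x : ℕ → ℝ := fun k => (g k : ℝ) / P ^ (e + k) with hx
  have hmono : Monotone x := by
    apply monotone_nat_of_le_succ
    intro k
    rw [hx]
    dsimp only
    rw [div_le_div_iff₀ (hPpow _) (hPpow _)]
    have h1 : (p : ℝ) * g k ≤ g (k + 1) := by exact_mod_cast (hbd k).1
    calc (g k : ℝ) * P ^ (e + (k + 1)) = ((p : ℝ) * g k) * P ^ (e + k) := by
          rw [show e + (k + 1) = (e + k) + 1 from rfl, pow_succ]; ring
      _ ≤ (g (k + 1) : ℝ) * P ^ (e + k) := by
          apply mul_le_mul_of_nonneg_right h1 (hPpow _).le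
  have hdist : ∀ k, dist (x k) (x (k + 1)) ≤ ((c : ℝ) / P ^ (e + 1)) * (P⁻¹) ^ k := by
    intro k
    rw [Real.dist_eq, abs_sub_comm, abs_of_nonneg (sub_nonneg.2 (hmono (Nat.le_succ k)))]
    have h2 : (g (k + 1) : ℝ) ≤ (p : ℝ) * g k + c := by exact_mod_cast (hbd k).2
    have key : x (k + 1) ≤ x k + (c : ℝ) / P ^ (e + k + 1) := by
      rw [hx]
      dsimp only
      rw [div_add_div _ _ (ne_of_gt (hPpow (e + k))) (ne_of_gt (hPpow (e + k + 1))),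
        div_le_div_iff₀ (hPpow _) (mul_pos (hPpow (e + k)) (hPpow (e + k + 1)))]
      have hpow : P ^ (e + k + 1) = P ^ (e + k) * P := pow_succ _ _
      calc (g (k + 1) : ℝ) * (P ^ (e + k) * P ^ (e + k + 1))
          ≤ ((p : ℝ) * g k + c) * (P ^ (e + k) * P ^ (e + k + 1)) := by
            apply mul_le_mul_of_nonneg_right h2 (mul_pos (hPpow _) (hPpow _)).le
        _ = ((g k : ℝ) * P ^ (e + k + 1) + P ^ (e + k) * c) * P ^ (e + k + 1) := by
            rw [hpow]; push_cast; ring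
    have : x (k + 1) - x k ≤ (c : ℝ) / P ^ (e + k + 1) := by linarith
    refine le_trans this (le_of_eq ?_)
    rw [show e + k + 1 = (e + 1) + k from by omega, pow_add, inv_pow]
    field_simp
  have hcauchy : CauchySeq x :=
    cauchySeq_of_le_geometric P⁻¹ ((c : ℝ) / P ^ (e + 1))
      (by rw [inv_lt_one_iff₀]; right; exact hP1) hdist
  obtain ⟨l, hl⟩ := cauchySeq_tendsto_of_complete hcauchy
  have hx0 : x 0 = (n : ℝ) / P ^ e := by rw [hx]; simp [hg0]
  have hlow : (n : ℝ) / P ^ e ≤ l := by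
    rw [← hx0]
    exact ge_of_tendsto hl (Filter.Eventually.of_forall (fun k => hmono (Nat.zero_le k)))
  have hhigh : l ≤ ((n : ℝ) + r + 1) / P ^ e := by
    have hd := dist_le_of_le_geometric_of_tendsto₀ P⁻¹ ((c : ℝ) / P ^ (e + 1))
      (by rw [inv_lt_one_iff₀]; right; exact hP1) hdist hl
    rw [Real.dist_eq, abs_sub_comm, abs_le] at hd
    have hgeom : (c : ℝ) / P ^ (e + 1) / (1 - P⁻¹) ≤ ((r : ℝ) + 1) / P ^ e := by
      have hc' : (c : ℝ) = ((r : ℝ) + 1) * (P - 1) := by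
        rw [hc]
        push_cast [Nat.cast_sub hp.one_lt.le]
        ring
      have h1 : 1 - P⁻¹ = (P - 1) / P := by field_simp
      have hne1 : P - 1 ≠ 0 := by linarith
      have hne2 : P ≠ 0 := by linarith
      have hne3 : P ^ e ≠ 0 := ne_of_gt (hPpow e)
      rw [hc', h1, pow_succ]
      rw [div_div_div_eq]
      rw [div_le_div_iff₀ (mul_pos (mul_pos (hPpow e) hP0) (by linarith : (0:ℝ) < P - 1)) (hPpow e)]
      ring_nf
      nlinarith [hPpow e, hP1]
    have hthis : l - x 0 ≤ ((r : ℝ) + 1) / P ^ e := le_trans hd.2 hgeom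
    rw [hx0] at hthis
    rw [show ((n : ℝ) + r + 1) = (n : ℝ) + ((r : ℝ) + 1) from by ring, add_div]
    linarith
  -- downward jumps
  have hdownj : ∀ j : ℕ, ∃ m, IsDiffJump p 𝔞 (e - j) m := by
    intro j
    induction j with
    | zero => exact ⟨n, by simpa using hj⟩
    | succ j ih =>
      obtain ⟨m, hm⟩ := ih
      by_cases h : j < e
      · have he : e - j = (e - (j + 1)) + 1 := by omega
        rw [he] at hm
        obtain ⟨n', _, hn'⟩ := jump_down hm
        exact ⟨n', hn'⟩
      · have he : e - (j + 1) = e - j := by omega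
        rw [he]
        exact ⟨m, hm⟩
  have hall : ∀ k : ℕ, ∃ m, IsDiffJump p 𝔞 k m := by
    intro k
    by_cases h : k ≤ e
    · have := hdownj (e - k)
      rwa [Nat.sub_sub_self h] at this
    · refine ⟨g (k - e), ?_⟩
      have := hgjump (k - e)
      rwa [Nat.add_sub_cancel' (by omega : e ≤ k)] at this
  choose ν0 hν0 using hall
  refine ⟨l, ⟨le_trans (div_nonneg (Nat.cast_nonneg n) (hPpow e).le) hlow, ?_⟩, hlow, hhigh⟩
  refine ⟨fun k => if k < e then ν0 k else g (k - e), fun k => ?_, ?_⟩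
  · by_cases h : k < e
    · simpa [h] using hν0 k
    · simp only [h, if_false]
      have := hgjump (k - e)
      rwa [Nat.add_sub_cancel' (by omega : e ≤ k)] at this
  · have h1 : Filter.Tendsto (fun k => x (k - e)) Filter.atTop (nhds l) :=
      hl.comp (Filter.tendsto_sub_atTop_nat e)
    refine Filter.Tendsto.congr' ?_ h1
    filter_upwards [Filter.eventually_ge_atTop e] with k hk
    have h2 : ¬ (k < e) := by omega
    simp only [h2, if_false, hx]
    rw [Nat.add_sub_cancel' hk]

theorem stmt17 {R : Type*} [CommRing R] (p : ℕ) (hp : p.Prime) [CharP R p]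
    (hFF : FFinite p R) (hFS : FSplit p R)
    (r : ℕ) (f : Fin r → R) (𝔞 : Ideal R) (h𝔞 : 𝔞 = Ideal.span (Set.range f))
    (hproper : 𝔞 ≠ ⊤)
    (hdisc : ∀ B : ℝ, {l : ℝ | IsDiffThreshold p 𝔞 l ∧ l ≤ B}.Finite) :
    ∃ C : ℕ, ∀ e : ℕ,
      Set.ncard {n : ℕ | n < r * p ^ e ∧ IsDiffJump p 𝔞 e n} ≤ C := by
  subst h𝔞
  obtain ⟨σ, hσ1, hσ⟩ := hFS
  have hfin := hdisc (2 * r + 1 : ℝ)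
  classical
  refine ⟨hfin.toFinset.card * (r + 2), fun e => ?_⟩
  have hPpow : (0 : ℝ) < (p : ℝ) ^ e := pow_pos (by exact_mod_cast hp.pos) e
  set T := hfin.toFinset with hT
  set Fe : Finset ℕ := T.biUnion
    (fun l => Finset.Icc (⌊l * (p : ℝ) ^ e⌋₊ - (r + 1)) ⌊l * (p : ℝ) ^ e⌋₊) with hFe
  have hsub : {n : ℕ | n < r * p ^ e ∧ IsDiffJump p (Ideal.span (Set.range f)) e n} ⊆ ↑Fe := by
    rintro n ⟨hn1, hn2⟩
    obtain ⟨l, hthr, hl1, hl2⟩ := jump_to_threshold hp hσ1 hσ f hn2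
    have hlB : l ≤ 2 * r + 1 := by
      have hn' : (n : ℝ) + 1 ≤ (r : ℝ) * (p : ℝ) ^ e := by
        have : (n + 1 : ℕ) ≤ r * p ^ e := hn1
        exact_mod_cast this
      have hone : (1 : ℝ) ≤ (p : ℝ) ^ e :=
        one_le_pow₀ (by exact_mod_cast hp.one_lt.le : (1 : ℝ) ≤ (p : ℝ))
      have hr' : (r : ℝ) ≤ (r : ℝ) * (p : ℝ) ^ e :=
        le_mul_of_one_le_right (Nat.cast_nonneg r) hone
      refine le_trans hl2 ?_
      rw [div_le_iff₀ hPpow]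
      nlinarith
    have hmem : l ∈ T := hfin.mem_toFinset.2 ⟨hthr, hlB⟩
    have hup : l * (p : ℝ) ^ e ≤ ((n + r + 1 : ℕ) : ℝ) := by
      push_cast
      rw [← le_div_iff₀ hPpow]
      exact hl2
    have hfl1 : ⌊l * (p : ℝ) ^ e⌋₊ ≤ n + r + 1 := by
      have := Nat.floor_le_floor (R := ℝ) hup
      rwa [Nat.floor_natCast] at this
    have hfl2 : n ≤ ⌊l * (p : ℝ) ^ e⌋₊ := by
      apply Nat.le_floor
      calc ((n : ℕ) : ℝ) = ((n : ℝ) / (p : ℝ) ^ e) * (p : ℝ) ^ e := by field_simp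
        _ ≤ l * (p : ℝ) ^ e := mul_le_mul_of_nonneg_right hl1 hPpow.le
    refine Finset.mem_coe.2 (Finset.mem_biUnion.2 ⟨l, hmem, Finset.mem_Icc.2 ⟨?_, hfl2⟩⟩)
    omega
  calc Set.ncard {n : ℕ | n < r * p ^ e ∧ IsDiffJump p (Ideal.span (Set.range f)) e n}
      ≤ Set.ncard (↑Fe : Set ℕ) := Set.ncard_le_ncard hsub (Finset.finite_toSet Fe)
    _ = Fe.card := Set.ncard_coe_finset Fe
    _ ≤ ∑ l ∈ T, (Finset.Icc (⌊l * (p : ℝ) ^ e⌋₊ - (r + 1)) ⌊l * (p : ℝ) ^ e⌋₊).card :=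
        Finset.card_biUnion_le
    _ ≤ T.card * (r + 2) := by
        rw [← smul_eq_mul]
        apply Finset.sum_le_card_nsmul
        intro l _
        rw [Nat.card_Icc]
        omega
end
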